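/- arXiv:1607.04115 — 5 statements merged into one kernel-verified Lean document; each statement's English description precedes it below -/
import Mathlib

section
/- The number of permutations σ of {0,1,…,n−1} such that σ(i) ≠ i and σ(i) ≠ i+1 (mod n) for all i equals ∑_{r=0}^{n} (−1)^r · (2n/(2n−r)) · C(2n−r, r) · (n−r)!, for n ≥ 2. -/
/-!
Inclusion–exclusion over the forbidden cells gives the rook-theoretic formula: the permutations of
an `n`-set whose graph avoids a board `S` number `∑ (-1)^r r_r(S) (n - r)!`, where `r_r(S)` counts
the `r`-sets of cells of `S` no two of which share a row or a column.

Listing the `2n` cells of the ménage board as `(0,0), (0,1), (1,1), (1,2), …, (n-1,n-1), (n-1,0)`,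
two distinct cells share a row or a column exactly when they are cyclically consecutive. So `r_r`
counts the `r`-subsets of a `2n`-cycle with no two adjacent points. Splitting on whether the last
point is chosen reduces this to the count `C(m + 1 - r, r)` for a path of `m` points, and gives
`r_r = C(2n - r, r) + C(2n - r - 1, r - 1) = 2n / (2n - r) · C(2n - r, r)`.
-/

open Finset Equiv

theorem Nat.mod_eq_ite_of_le {x m : ℕ} (h : x ≤ m) : x % m = if x = m then 0 else x := by
  split_ifs with hx
  · rw [hx, Nat.mod_self]
  · exact Nat.mod_eq_of_lt (by omega)

theorem ZMod.natCast_eq_natCast_iff_of_le {n x y : ℕ} (hx : x ≤ n) (hy : y ≤ n) :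
    (x : ZMod n) = y ↔ (if x = n then 0 else x) = if y = n then 0 else y := by
  rw [ZMod.natCast_eq_natCast_iff', Nat.mod_eq_ite_of_le hx, Nat.mod_eq_ite_of_le hy]

theorem Finset.powersetCard_image_of_injOn {α β : Type*} [DecidableEq β] {f : α → β}
    {s : Finset α} (hf : Set.InjOn f s) (r : ℕ) :
    (s.image f).powersetCard r = (s.powersetCard r).image (·.image f) := by
  ext A
  simp only [mem_powersetCard, mem_image, subset_image_iff]
  constructor
  · rintro ⟨⟨T, hT, rfl⟩, hcard⟩
    exact ⟨T, ⟨hT, card_image_of_injOn (hf.mono hT) ▸ hcard⟩, rfl⟩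
  · rintro ⟨T, ⟨hT, hcard⟩, rfl⟩
    exact ⟨⟨T, hT, rfl⟩, (card_image_of_injOn (hf.mono hT)).trans hcard⟩

theorem card_filter_mem_eq_card {α : Type*} [DecidableEq α] {F G : Finset (Finset α)} {x : α}
    (hF : ∀ T ∈ F, x ∈ T → T.erase x ∈ G) (hG : ∀ T ∈ G, x ∉ T ∧ insert x T ∈ F) :
    #{T ∈ F | x ∈ T} = #G :=
  card_nbij' (·.erase x) (insert x) (fun T hT => hF T (mem_filter.1 hT).1 (mem_filter.1 hT).2)
    (fun T hT => mem_filter.2 ⟨(hG T hT).2, mem_insert_self x T⟩)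
    (fun _ hT => insert_erase (mem_filter.1 hT).2) (fun T hT => erase_insert (hG T hT).1)

section Rook

variable {α β : Type*}

def IsRookPlacement (A : Finset (α × β)) : Prop :=
  ∀ p ∈ A, ∀ q ∈ A, p.1 = q.1 ∨ p.2 = q.2 → p = q

instance [DecidableEq α] [DecidableEq β] : DecidablePred (IsRookPlacement (α := α) (β := β)) :=
  fun A => inferInstanceAs (Decidable (∀ p ∈ A, ∀ q ∈ A, p.1 = q.1 ∨ p.2 = q.2 → p = q))

def rookNumber [DecidableEq α] [DecidableEq β] (S : Finset (α × β)) (r : ℕ) : ℕ :=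
  #{A ∈ S.powersetCard r | IsRookPlacement A}

theorem IsRookPlacement.of_forall_apply_eq {σ : Perm α} {A : Finset (α × α)}
    (h : ∀ p ∈ A, σ p.1 = p.2) : IsRookPlacement A := by
  intro p hp q hq hpq
  have hp' := h p hp
  have hq' := h q hq
  rcases hpq with h1 | h2
  · exact Prod.ext h1 (by rw [← hp', ← hq', h1])
  · exact Prod.ext (σ.injective (by rw [hp', hq', h2])) h2

variable [Fintype α] [DecidableEq α]

theorem card_perm_eqOn (τ : Perm α) (D : Finset α) :
    #{σ : Perm α | ∀ a ∈ D, σ a = τ a} = (Fintype.card α - #D).factorial := by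
  have e : {σ : Perm α // ∀ a ∈ D, σ a = τ a} ≃ {ρ : Perm α // ∀ a, ¬a ∉ D → ρ a = a} :=
    (Equiv.mulLeft τ⁻¹).subtypeEquiv fun σ => by
      simp only [not_not, coe_mulLeft, Perm.coe_mul, Function.comp_apply, Perm.inv_eq_iff_eq]
  rw [← Fintype.card_subtype, Fintype.card_congr (e.trans (Perm.subtypeEquivSubtypePerm _).symm),
    Fintype.card_perm, Fintype.card_subtype_compl, Fintype.card_coe]

theorem IsRookPlacement.card_perm_extending {A : Finset (α × α)} (hA : IsRookPlacement A) :
    #{σ : Perm α | ∀ p ∈ A, σ p.1 = p.2} = (Fintype.card α - #A).factorial := by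
  obtain ⟨τ, hτ⟩ := Perm.exists_extending_pair (fun p : A => p.1.1) (fun p : A => p.1.2)
    (fun p q h => Subtype.ext (hA _ p.2 _ q.2 (Or.inl h)))
    (fun p q h => Subtype.ext (hA _ p.2 _ q.2 (Or.inr h)))
  have hfst : #(A.image Prod.fst) = #A :=
    card_image_of_injOn fun p hp q hq h => hA p hp q hq (Or.inl h)
  rw [← hfst, ← card_perm_eqOn τ]
  congr 1
  refine filter_congr fun σ _ => ?_
  simp only [forall_mem_image]
  exact forall₂_congr fun p hp => by rw [hτ ⟨p, hp⟩]

theorem card_perm_avoiding_eq_sum_rookNumber (S : Finset (α × α)) :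
    (#{σ : Perm α | ∀ a, (a, σ a) ∉ S} : ℤ) =
      ∑ r ∈ range (Fintype.card α + 1),
        (-1 : ℤ) ^ r * rookNumber S r * (Fintype.card α - r).factorial := by
  have hinf : (S.inf fun p => ({σ : Perm α | σ p.1 = p.2} : Finset _)ᶜ) =
      ({σ : Perm α | ∀ a, (a, σ a) ∉ S} : Finset _) := by
    ext σ
    simp only [mem_inf, mem_compl, mem_filter_univ]
    exact ⟨fun h a ha => h _ ha rfl, fun h p hp hσ => h p.1 (hσ ▸ hp)⟩
  have hext (t : Finset (α × α)) : #(t.inf fun p => ({σ : Perm α | σ p.1 = p.2} : Finset _)) =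
      if IsRookPlacement t then (Fintype.card α - #t).factorial else 0 := by
    have : (t.inf fun p => ({σ : Perm α | σ p.1 = p.2} : Finset _)) =
        ({σ : Perm α | ∀ p ∈ t, σ p.1 = p.2} : Finset _) := by
      ext σ
      simp only [mem_inf, mem_filter_univ]
    split_ifs with ht
    · rw [this, ht.card_perm_extending]
    · rw [this, card_eq_zero, filter_eq_empty_iff]
      exact fun σ _ h => ht (.of_forall_apply_eq h)
  have hcard : ∀ t ∈ ({t ∈ S.powerset | IsRookPlacement t} : Finset _),
      #t ∈ range (Fintype.card α + 1) := by
    intro t ht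
    rw [mem_filter] at ht
    rw [mem_range, Nat.lt_succ_iff, ← card_image_of_injOn fun p hp q hq h =>
      ht.2 p hp q hq (Or.inl h)]
    exact card_le_univ _
  rw [← hinf, inclusion_exclusion_card_inf_compl]
  simp only [hext, Nat.cast_ite, Nat.cast_zero, mul_ite, mul_zero, ← sum_filter]
  rw [← sum_fiberwise_of_maps_to hcard]
  refine sum_congr rfl fun r _ => ?_
  rw [sum_congr rfl fun t ht => by rw [(mem_filter.1 ht).2], sum_const, nsmul_eq_mul, rookNumber,
    powersetCard_eq_filter, filter_filter, filter_filter]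
  simp only [and_comm]
  ring

end Rook

section Sparse

def IsSparse (T : Finset ℕ) : Prop := ∀ x ∈ T, x + 1 ∉ T

instance : DecidablePred IsSparse := fun T => inferInstanceAs (Decidable (∀ x ∈ T, x + 1 ∉ T))

def IsCyclicallySparse (m : ℕ) (T : Finset ℕ) : Prop := ∀ x ∈ T, (x + 1) % m ∉ T

instance (m : ℕ) : DecidablePred (IsCyclicallySparse m) :=
  fun T => inferInstanceAs (Decidable (∀ x ∈ T, (x + 1) % m ∉ T))

theorem sparse_Ico_filter_notMem (a m r : ℕ) :
    {T ∈ {T ∈ (Ico a (a + (m + 2))).powersetCard r | IsSparse T} | a + m + 1 ∉ T} =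
      {T ∈ (Ico a (a + (m + 1))).powersetCard r | IsSparse T} := by
  ext T
  simp only [mem_filter, mem_powersetCard, subset_iff, mem_Ico]
  constructor
  · rintro ⟨⟨⟨hT, hcard⟩, hsp⟩, hx⟩
    refine ⟨⟨fun y hy => ?_, hcard⟩, hsp⟩
    have := hT hy
    have : y ≠ a + m + 1 := fun h => hx (h ▸ hy)
    omega
  · rintro ⟨⟨hT, hcard⟩, hsp⟩
    exact ⟨⟨⟨fun y hy => by have := hT hy; omega, hcard⟩, hsp⟩, fun h => by have := hT h; omega⟩

theorem card_sparse_Ico_filter_mem (a m r : ℕ) :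
    #{T ∈ {T ∈ (Ico a (a + (m + 2))).powersetCard (r + 1) | IsSparse T} | a + m + 1 ∈ T} =
      #{T ∈ (Ico a (a + m)).powersetCard r | IsSparse T} := by
  refine card_filter_mem_eq_card ?_ ?_
  · simp only [mem_filter, mem_powersetCard, subset_iff, mem_Ico]
    rintro T ⟨⟨hT, hcard⟩, hsp⟩ hx
    refine ⟨⟨fun y hy => ?_, ?_⟩, fun y hy hy' => hsp y (mem_erase.1 hy).2 (mem_erase.1 hy').2⟩
    · rw [mem_erase] at hy
      have := hT hy.2
      have : y ≠ a + m := fun h => hsp y hy.2 (by rwa [h])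
      omega
    · rw [card_erase_of_mem hx, hcard]; rfl
  · simp only [mem_filter, mem_powersetCard, subset_iff, mem_Ico]
    rintro T ⟨⟨hT, hcard⟩, hsp⟩
    have hx : a + m + 1 ∉ T := fun h => by have := hT h; omega
    refine ⟨hx, ⟨⟨fun y hy => ?_, by rw [card_insert_of_notMem hx, hcard]⟩, ?_⟩⟩
    · rcases mem_insert.1 hy with rfl | hy
      · omega
      · have := hT hy; omega
    · intro y hy h
      rw [mem_insert] at hy h
      rcases hy with rfl | hy <;> rcases h with h | h
      · omega
      · have := hT h; omega
      · have := hT hy; omega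
      · exact hsp y hy h

theorem card_sparse_Ico (a : ℕ) : ∀ m r,
    #{T ∈ (Ico a (a + m)).powersetCard r | IsSparse T} = (m + 1 - r).choose r
  | m, 0 => by simp [IsSparse, filter_singleton]
  | 0, r + 1 => by simp
  | 1, r + 1 => by
    rcases r with _ | r
    · simp [IsSparse, powersetCard_one, filter_singleton]
    · simp [powersetCard_eq_empty.2]
  | m + 2, r + 1 => by
    rw [← card_filter_add_card_filter_not (a + m + 1 ∈ ·), card_sparse_Ico_filter_mem,
      sparse_Ico_filter_notMem, card_sparse_Ico a m r, card_sparse_Ico a (m + 1) (r + 1)]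
    rcases le_or_gt r (m + 1) with h | h
    · rw [show m + 2 + 1 - (r + 1) = m + 1 - r + 1 by omega,
        show m + 1 + 1 - (r + 1) = m + 1 - r by omega, Nat.choose_succ_succ']
    · rw [Nat.choose_eq_zero_of_lt (by omega : m + 2 + 1 - (r + 1) < r + 1),
        Nat.choose_eq_zero_of_lt (by omega : m + 1 + 1 - (r + 1) < r + 1),
        Nat.choose_eq_zero_of_lt (by omega : m + 1 - r < r)]

theorem cyclicallySparse_filter_notMem (b r : ℕ) :
    {T ∈ {T ∈ (range (b + 1)).powersetCard r | IsCyclicallySparse (b + 1) T} | b ∉ T} =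
      {T ∈ (Ico 0 (0 + b)).powersetCard r | IsSparse T} := by
  ext T
  simp only [mem_filter, mem_powersetCard, subset_iff, mem_range, mem_Ico]
  constructor
  · rintro ⟨⟨⟨hT, hcard⟩, hcyc⟩, hb⟩
    have hlt : ∀ x ∈ T, x < b := fun x hx => by
      have := hT hx
      have : x ≠ b := fun h => hb (h ▸ hx)
      omega
    refine ⟨⟨fun x hx => ⟨x.zero_le, by have := hlt x hx; omega⟩, hcard⟩, fun x hx hx' => ?_⟩
    exact hcyc x hx (by rwa [Nat.mod_eq_of_lt (by have := hlt x hx; omega)])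
  · rintro ⟨⟨hT, hcard⟩, hsp⟩
    refine ⟨⟨⟨fun x hx => by have := hT hx; omega, hcard⟩, fun x hx hx' => ?_⟩,
      fun hb => by have := hT hb; omega⟩
    exact hsp x hx (by rwa [Nat.mod_eq_of_lt (by have := hT hx; omega)] at hx')

theorem card_cyclicallySparse_filter_mem (b r : ℕ) :
    #{T ∈ {T ∈ (range (b + 3)).powersetCard (r + 1) | IsCyclicallySparse (b + 3) T} |
        b + 2 ∈ T} = #{T ∈ (Ico 1 (1 + b)).powersetCard r | IsSparse T} := by
  have hwrap : (b + 2 + 1) % (b + 3) = 0 := Nat.mod_self _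
  refine card_filter_mem_eq_card ?_ ?_
  · simp only [mem_filter, mem_powersetCard, subset_iff, mem_range, mem_Ico]
    rintro T ⟨⟨hT, hcard⟩, hcyc⟩ hb
    have h0 : 0 ∉ T := hwrap ▸ hcyc _ hb
    have hb1 : b + 1 ∉ T := fun h => hcyc _ h (by rwa [Nat.mod_eq_of_lt (by omega)])
    refine ⟨⟨fun y hy => ?_, by rw [card_erase_of_mem hb, hcard]; rfl⟩, fun y hy hy' => ?_⟩
    · obtain ⟨hne, hy⟩ := mem_erase.1 hy
      have := hT hy
      have : y ≠ 0 := fun h => h0 (h ▸ hy)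
      have : y ≠ b + 1 := fun h => hb1 (h ▸ hy)
      omega
    · obtain ⟨hne', hy'⟩ := mem_erase.1 hy'
      have := hT hy'
      exact hcyc y (mem_erase.1 hy).2 (by rwa [Nat.mod_eq_of_lt (by omega)])
  · simp only [mem_filter, mem_powersetCard, subset_iff, mem_range, mem_Ico]
    rintro T ⟨⟨hT, hcard⟩, hsp⟩
    have hb : b + 2 ∉ T := fun h => by have := hT h; omega
    refine ⟨hb, ⟨fun y hy => ?_, by rw [card_insert_of_notMem hb, hcard]⟩, fun y hy hy' => ?_⟩
    · rcases mem_insert.1 hy with rfl | hy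
      · omega
      · have := hT hy; omega
    · rcases mem_insert.1 hy with rfl | hy
      · rw [hwrap, mem_insert] at hy'
        rcases hy' with h | h
        · omega
        · have := hT h; omega
      · have := hT hy
        rw [Nat.mod_eq_of_lt (by omega), mem_insert] at hy'
        rcases hy' with h | h
        · omega
        · exact hsp y hy h

theorem card_cyclicallySparse_succ (b r : ℕ) :
    #{T ∈ (range (b + 3)).powersetCard (r + 1) | IsCyclicallySparse (b + 3) T} =
      (b + 2 - r).choose (r + 1) + (b + 1 - r).choose r := by
  rw [← card_filter_add_card_filter_not (b + 2 ∈ ·), card_cyclicallySparse_filter_mem,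
    cyclicallySparse_filter_notMem (b + 2), card_sparse_Ico, card_sparse_Ico, add_comm]
  congr 2
  omega

theorem card_cyclicallySparse_mul {m : ℕ} (hm : 3 ≤ m) (r : ℕ) :
    #{T ∈ (range m).powersetCard r | IsCyclicallySparse m T} * (m - r) =
      m * (m - r).choose r := by
  obtain ⟨b, rfl⟩ : ∃ b, m = b + 3 := ⟨m - 3, by omega⟩
  rcases r with _ | r
  · simp [IsCyclicallySparse, filter_singleton]
  rw [card_cyclicallySparse_succ]
  rcases le_or_gt r b with h | h
  · obtain ⟨d, rfl⟩ : ∃ d, b = r + d := ⟨b - r, by omega⟩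
    have pascal := Nat.add_one_mul_choose_eq (d + 1) r
    rw [show r + d + 3 - (r + 1) = d + 2 by omega, show r + d + 2 - r = d + 2 by omega,
      show r + d + 1 - r = d + 1 by omega]
    linear_combination pascal
  · rw [Nat.choose_eq_zero_of_lt (by omega : b + 2 - r < r + 1),
      Nat.choose_eq_zero_of_lt (by omega : b + 1 - r < r),
      Nat.choose_eq_zero_of_lt (by omega : b + 3 - (r + 1) < r + 1)]
    simp

theorem card_cyclicallySparse_eq {m r : ℕ} (hm : 3 ≤ m) (hr : r < m) :
    (#{T ∈ (range m).powersetCard r | IsCyclicallySparse m T} : ℚ) =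
      m / (m - r) * (m - r).choose r := by
  have hpos : (m : ℚ) - r ≠ 0 := sub_ne_zero.2 (by exact_mod_cast hr.ne')
  rw [div_mul_eq_mul_div, eq_div_iff hpos, ← Nat.cast_sub hr.le]
  exact_mod_cast card_cyclicallySparse_mul hm r

end Sparse

section Menage

def menageCell (n k : ℕ) : ZMod n × ZMod n := ((k / 2 : ℕ), ((k + 1) / 2 : ℕ))

def menageBoard (n : ℕ) : Finset (ZMod n × ZMod n) := (range (2 * n)).image (menageCell n)

theorem mem_menageBoard {n : ℕ} [NeZero n] {i j : ZMod n} :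
    (i, j) ∈ menageBoard n ↔ j = i ∨ j = i + 1 := by
  simp only [menageBoard, menageCell, mem_image, mem_range, Prod.mk.injEq]
  constructor
  · rintro ⟨k, -, rfl, rfl⟩
    rcases Nat.even_or_odd' k with ⟨l, rfl | rfl⟩
    · left; congr 1; omega
    · right; rw [show (2 * l + 1 + 1) / 2 = (2 * l + 1) / 2 + 1 by omega]; push_cast; rfl
  · have := i.val_lt
    rintro (rfl | rfl)
    · exact ⟨2 * j.val, by omega, by simp, by simp [show (2 * j.val + 1) / 2 = j.val by omega]⟩
    · refine ⟨2 * i.val + 1, by omega, ?_, ?_⟩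
      · simp [show (2 * i.val + 1) / 2 = i.val by omega]
      · simp [show (2 * i.val + 1 + 1) / 2 = i.val + 1 by omega]

theorem menageCell_conflict_iff {n j k : ℕ} (hj : j < 2 * n) (hk : k < 2 * n) :
    ((menageCell n j).1 = (menageCell n k).1 ∨ (menageCell n j).2 = (menageCell n k).2) ↔
      j = k ∨ (j + 1) % (2 * n) = k ∨ (k + 1) % (2 * n) = j := by
  simp only [menageCell]
  rw [ZMod.natCast_eq_natCast_iff_of_le (by omega) (by omega),
    ZMod.natCast_eq_natCast_iff_of_le (by omega) (by omega),
    Nat.mod_eq_ite_of_le (by omega : j + 1 ≤ 2 * n), Nat.mod_eq_ite_of_le (by omega : k + 1 ≤ 2 * n)]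
  split_ifs <;> omega

theorem menageCell_injOn {n : ℕ} (hn : 2 ≤ n) : Set.InjOn (menageCell n) (range (2 * n)) := by
  intro j hj k hk h
  simp only [coe_range, Set.mem_Iio] at hj hk
  simp only [menageCell, Prod.mk.injEq] at h
  rw [ZMod.natCast_eq_natCast_iff_of_le (by omega) (by omega),
    ZMod.natCast_eq_natCast_iff_of_le (by omega) (by omega)] at h
  split_ifs at h <;> omega

theorem isRookPlacement_image_menageCell_iff {n : ℕ} (hn : 2 ≤ n) {T : Finset ℕ}
    (hT : T ⊆ range (2 * n)) :
    IsRookPlacement (T.image (menageCell n)) ↔ IsCyclicallySparse (2 * n) T := by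
  have hlt : ∀ j ∈ T, j < 2 * n := fun j hj => mem_range.1 (hT hj)
  simp only [IsRookPlacement, forall_mem_image]
  constructor
  · intro h j hj hj'
    have hcell := h hj hj' ((menageCell_conflict_iff (hlt j hj) (hlt _ hj')).2 (.inr (.inl rfl)))
    have := menageCell_injOn hn (hT hj) (hT hj') hcell
    rw [Nat.mod_eq_ite_of_le (hlt j hj)] at this
    split_ifs at this <;> omega
  · intro h j hj k hk hc
    rcases (menageCell_conflict_iff (hlt j hj) (hlt k hk)).1 hc with rfl | rfl | rfl
    · rfl
    · exact absurd hk (h j hj)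
    · exact absurd hj (h k hk)

theorem rookNumber_menageBoard {n : ℕ} (hn : 2 ≤ n) (r : ℕ) :
    rookNumber (menageBoard n) r =
      #{T ∈ (range (2 * n)).powersetCard r | IsCyclicallySparse (2 * n) T} := by
  rw [rookNumber, menageBoard, powersetCard_image_of_injOn (menageCell_injOn hn), filter_image,
    card_image_of_injOn]
  · exact congrArg card <| filter_congr fun T hT =>
      isRookPlacement_image_menageCell_iff hn (mem_powersetCard.1 hT).1
  · exact (image_injOn_powerset_of_injOn (menageCell_injOn hn)).mono fun T hT =>
      mem_powerset.2 (mem_powersetCard.1 (mem_filter.1 hT).1).1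

end Menage

/-- Touchard's formula: the number of permutations `σ` of `{0,…,n−1}` with `σ i ≠ i` and
`σ i ≠ i + 1 (mod n)` for all `i` equals
`∑_{r=0}^{n} (−1)^r · (2n/(2n−r)) · C(2n−r, r) · (n−r)!`, for `n ≥ 2`. -/
theorem touchard_menage (n : ℕ) (hn : 2 ≤ n) :
    (Nat.card {σ : Equiv.Perm (ZMod n) // ∀ i, σ i ≠ i ∧ σ i ≠ i + 1} : ℚ) =
      ∑ r ∈ Finset.range (n + 1),
        (-1 : ℚ) ^ r * (2 * n / ((2 * n : ℚ) - r)) * Nat.choose (2 * n - r) r *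
          Nat.factorial (n - r) := by
  have : NeZero n := ⟨by omega⟩
  have havoid : Nat.card {σ : Perm (ZMod n) // ∀ i, σ i ≠ i ∧ σ i ≠ i + 1} =
      #{σ : Perm (ZMod n) | ∀ i, (i, σ i) ∉ menageBoard n} := by
    rw [Nat.card_eq_fintype_card, Fintype.card_subtype]
    simp only [mem_menageBoard, not_or, ne_comm]
  have hrook := card_perm_avoiding_eq_sum_rookNumber (menageBoard n)
  rw [ZMod.card] at hrook
  rw [havoid, ← Int.cast_natCast, hrook]
  push_cast
  refine sum_congr rfl fun r hr => ?_
  have hr : r < 2 * n := by have := mem_range.1 hr; omega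
  rw [rookNumber_menageBoard hn, card_cyclicallySparse_eq (by omega) hr]
  push_cast
  ring
end

section
/- For n ≥ 2, the number of ways to seat n man-woman couples at a circular table with 2n labeled seats so that men and women alternate and no one sits adjacent to their partner equals 2·n! · ∑_{r=0}^{n} (−1)^r · (2n/(2n−r)) · C(2n−r, r) · (n−r)!. -/
/-- Two seats of the `2n`-cycle are adjacent. -/
def SeatAdj {m : ℕ} (a b : ZMod m) : Prop := a = b + 1 ∨ b = a + 1

/-!
Write seat `2j + b` of the `2n`-cycle as `(j, b) : ZMod n × Bool`. An alternating seating is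
determined by the gender sitting on the even seats, the bijection placing the people of that
gender, and the permutation `σ` of `ZMod n` sending the position of each odd-seated person to
that of their partner; partners are apart iff `σ k ∉ {k, k + 1}` for all `k`. Hence the count
is `2 · n! · Uₙ`, where `Uₙ` counts the permutations avoiding these `2n` cells.

Listed along the seat cycle, two cells share a row or a column iff they are consecutive. So in
the inclusion–exclusion formula for `Uₙ` a set of `r` cells contributes `(-1)^r (n - r)!` if no
two of them are cyclically consecutive and `0` otherwise. The number of such sparse `r`-subsets
of an `m`-cycle is `m / (m - r) · C(m - r, r)`: conditioning on whether it contains one fixed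
element reduces it to the count `C(k + 1 - r, r)` for a path of `k` vertices, which satisfies
Pascal's recursion.
-/

open Finset Function Nat

namespace ZMod

variable {m : ℕ} [NeZero m]

lemma val_add_one_eq_val_iff {x y : ZMod m} (hy : y ≠ 0) :
    x.val + 1 = y.val ↔ x + 1 = y := by
  constructor
  · intro h
    rw [← natCast_zmod_val y, ← h, Nat.cast_succ, natCast_zmod_val]
  · rintro rfl
    have hm : m ≠ 1 := by rintro rfl; exact hy (Subsingleton.elim _ _)
    rw [val_add, val_one'' hm, Nat.mod_eq_of_lt]
    refine lt_of_le_of_ne (val_lt x) fun h => hy ?_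
    have h' : ((x.val + 1 : ℕ) : ZMod m) = 0 := by rw [h, natCast_self]
    rwa [Nat.cast_succ, natCast_zmod_val] at h'

lemma image_val_univ : (univ : Finset (ZMod m)).image val = range m := by
  ext k
  simp only [mem_image, mem_univ, true_and, mem_range]
  exact ⟨fun ⟨x, hx⟩ => hx ▸ val_lt x, fun hk => ⟨k, val_natCast_of_lt hk⟩⟩

lemma apply_eq_apply_zero {β : Type*} {g : ZMod m → β}
    (hg : ∀ s, g (s + 1) = g s) (s : ZMod m) : g s = g 0 := by
  rw [← natCast_zmod_val s]
  induction s.val with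
  | zero => simp
  | succ k ih => rw [Nat.cast_succ, hg, ih]

end ZMod

namespace Menage

section Sparse

variable {α : Type*} [DecidableEq α] (f : α → α)

def sparseSubsets (s : Finset α) (r : ℕ) : Finset (Finset α) :=
  {t ∈ s.powersetCard r | ∀ x ∈ t, f x ∉ t}

variable {f}

lemma mem_sparseSubsets {s t : Finset α} {r : ℕ} :
    t ∈ sparseSubsets f s r ↔ t ⊆ s ∧ #t = r ∧ ∀ x ∈ t, f x ∉ t := by
  simp [sparseSubsets, and_assoc]

lemma sparseSubsets_zero (s : Finset α) : sparseSubsets f s 0 = {∅} := by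
  simp [sparseSubsets, Finset.filter_singleton]

lemma filter_notMem_sparseSubsets (s : Finset α) (r : ℕ) (y : α) :
    {t ∈ sparseSubsets f s r | y ∉ t} = sparseSubsets f (s.erase y) r := by
  ext t
  simp only [mem_filter, mem_sparseSubsets, subset_erase]
  tauto

lemma card_filter_mem_sparseSubsets (hf : Injective f) {s : Finset α} {x : α} (hx : f x ∈ s)
    (hfx : f (f x) ≠ f x) (r : ℕ) :
    #{t ∈ sparseSubsets f s (r + 1) | f x ∈ t} =
      #(sparseSubsets f (s \ {x, f x, f (f x)}) r) := by
  refine card_nbij' (·.erase (f x)) (insert (f x)) ?_ ?_ ?_ ?_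
  · intro t ht
    simp only [coe_filter, Set.mem_ofPred_eq, mem_sparseSubsets] at ht
    obtain ⟨⟨hts, hcard, hsparse⟩, hxt⟩ := ht
    simp only [mem_coe, mem_sparseSubsets]
    refine ⟨fun y hy => ?_, by rw [card_erase_of_mem hxt, hcard]; rfl,
      fun y hy hfy => hsparse y (mem_of_mem_erase hy) (mem_of_mem_erase hfy)⟩
    obtain ⟨hyx, hyt⟩ := mem_erase.1 hy
    have hy1 : y ≠ x := by rintro rfl; exact hsparse y hyt hxt
    have hy2 : y ≠ f (f x) := by rintro rfl; exact hsparse _ hxt hyt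
    simp [hts hyt, hy1, hyx, hy2]
  · intro t ht
    simp only [mem_coe, mem_sparseSubsets] at ht
    obtain ⟨hts, hcard, hsparse⟩ := ht
    have hxt : f x ∉ t := fun h => by simpa using hts h
    simp only [coe_filter, Set.mem_ofPred_eq, mem_sparseSubsets, mem_insert_self, and_true]
    refine ⟨insert_subset hx fun y hy => (mem_sdiff.1 (hts hy)).1,
      by rw [card_insert_of_notMem hxt, hcard], ?_⟩
    intro y hy hfy
    rcases mem_insert.1 hy with rfl | hy
    · rcases mem_insert.1 hfy with h | h
      · exact hfx h
      · simpa using hts h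
    · rcases mem_insert.1 hfy with h | h
      · have := hts hy
        simp [hf h] at this
      · exact hsparse y hy h
  · intro t ht
    simp only [coe_filter, Set.mem_ofPred_eq] at ht
    exact insert_erase ht.2
  · intro t ht
    simp only [mem_coe, mem_sparseSubsets] at ht
    exact erase_insert fun h => by simpa using ht.1 h

lemma card_sparseSubsets_image {β : Type*} [DecidableEq β] {g : β → β} {e : α → β}
    (he : Injective e) {s : Finset α} (hadj : ∀ x ∈ s, ∀ y ∈ s, g (e x) = e y ↔ f x = y)
    (r : ℕ) : #(sparseSubsets g (s.image e) r) = #(sparseSubsets f s r) := by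
  symm
  refine card_bij (fun t _ => t.image e) ?_ (fun t₁ _ t₂ _ h => image_injective he h) ?_
  · intro t ht
    obtain ⟨hts, hcard, hsparse⟩ := mem_sparseSubsets.1 ht
    refine mem_sparseSubsets.2
      ⟨image_subset_image hts, by rw [card_image_of_injective _ he, hcard], ?_⟩
    simp only [mem_image, forall_exists_index, and_imp, forall_apply_eq_imp_iff₂, not_exists,
      not_and]
    intro x hx y hy hxy
    exact hsparse x hx (((hadj x (hts hx) y (hts hy)).1 hxy.symm) ▸ hy)
  · intro t ht
    obtain ⟨hts, hcard, hsparse⟩ := mem_sparseSubsets.1 ht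
    have himage : ({x ∈ s | e x ∈ t} : Finset α).image e = t := by
      ext b
      simp only [mem_image, mem_filter]
      constructor
      · rintro ⟨x, ⟨-, hx⟩, rfl⟩; exact hx
      · intro hb
        obtain ⟨x, hx, rfl⟩ := mem_image.1 (hts hb)
        exact ⟨x, ⟨hx, hb⟩, rfl⟩
    refine ⟨{x ∈ s | e x ∈ t}, mem_sparseSubsets.2 ⟨filter_subset _ _, ?_, ?_⟩, himage⟩
    · rw [← card_image_of_injective _ he, himage, hcard]
    · simp only [mem_filter, and_imp, not_and]
      intro x hx hex hfx hefx
      exact hsparse _ hex (((hadj x hx _ hfx).2 rfl) ▸ hefx)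

end Sparse

lemma card_sparseSubsets_range (k r : ℕ) :
    #(sparseSubsets (· + 1) (range k) r) = (k + 1 - r).choose r := by
  induction k using Nat.strong_induction_on generalizing r with
  | _ k ih =>
  rcases r with _ | r
  · simp [sparseSubsets_zero]
  match k with
  | 0 => simp [sparseSubsets]
  | 1 =>
    rcases r with _ | r
    · decide
    · simp [sparseSubsets, powersetCard_eq_empty.2]
  | k + 2 =>
    have hsdiff : range (k + 2) \ {k, k + 1, k + 1 + 1} = range k := by
      ext; simp; omega
    have herase : (range (k + 2)).erase (k + 1) = range (k + 1) := by
      ext; simp; omega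
    rw [← card_filter_add_card_filter_not (p := (k + 1 ∈ ·)),
      card_filter_mem_sparseSubsets (add_left_injective 1) (by simp) (by omega),
      filter_notMem_sparseSubsets, hsdiff, herase,
      ih k (by omega), ih (k + 1) (by omega)]
    rcases le_or_gt r (k + 1) with hr | hr
    · rw [show k + 2 + 1 - (r + 1) = (k + 1 - r) + 1 by omega, Nat.choose_succ_succ',
        show k + 1 + 1 - (r + 1) = k + 1 - r by omega]
    · simp [Nat.choose_eq_zero_of_lt (show 0 < r by omega), show k + 1 - r = 0 by omega,
        show k + 1 + 1 - (r + 1) = 0 by omega, show k + 2 + 1 - (r + 1) = 0 by omega]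

lemma card_sparseSubsets_Ico (a k r : ℕ) :
    #(sparseSubsets (· + 1) (Ico a (a + k)) r) = (k + 1 - r).choose r := by
  have hIco : Ico a (a + k) = (range k).image (· + a) := by
    rw [range_eq_Ico, image_add_right_Ico, zero_add, add_comm]
  rw [hIco, card_sparseSubsets_image (f := (· + 1)) (add_left_injective a)
    (fun x _ y _ => by omega), card_sparseSubsets_range]

section Cyclic

variable {m : ℕ}

theorem card_sparseSubsets_zmod [NeZero m] (hm : 3 ≤ m) (r : ℕ) :
    #(sparseSubsets (· + 1) (univ : Finset (ZMod m)) (r + 1)) =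
      (m - 1 - r).choose (r + 1) + (m - 2 - r).choose r := by
  obtain ⟨k, rfl⟩ : ∃ k, m = k + 1 := ⟨m - 1, by omega⟩
  have : Fact (1 < k + 1) := ⟨by omega⟩
  have hval : Injective (ZMod.val : ZMod (k + 1) → ℕ) := ZMod.val_injective _
  have hadj (s : Finset (ZMod (k + 1))) (hs : (0 : ZMod (k + 1)) ∉ s) :
      ∀ x ∈ s, ∀ y ∈ s, x.val + 1 = y.val ↔ x + 1 = y := fun x _ y hy =>
    ZMod.val_add_one_eq_val_iff fun h => hs (h ▸ hy)
  have hmem := card_filter_mem_sparseSubsets (f := (· + 1)) (add_left_injective 1)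
    (x := (-1 : ZMod (k + 1))) (mem_univ _) (by simp) r
  simp only [neg_add_cancel, zero_add] at hmem
  have himage₁ : (univ.erase (0 : ZMod (k + 1))).image ZMod.val = Ico 1 (1 + k) := by
    rw [← sdiff_singleton_eq_erase, image_sdiff _ _ hval, ZMod.image_val_univ]
    ext; simp; omega
  have himage₂ : (univ \ {-1, 0, 1} : Finset (ZMod (k + 1))).image ZMod.val =
      Ico 2 (2 + (k - 2)) := by
    rw [image_sdiff _ _ hval, ZMod.image_val_univ]
    ext; simp [ZMod.val_one]; omega
  rw [← card_filter_add_card_filter_not (p := ((0 : ZMod (k + 1)) ∈ ·)), hmem,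
    filter_notMem_sparseSubsets,
    ← card_sparseSubsets_image hval (hadj _ (by simp)),
    ← card_sparseSubsets_image hval (hadj _ (by simp)), himage₁, himage₂,
    card_sparseSubsets_Ico, card_sparseSubsets_Ico]
  rw [show k - 2 + 1 - r = k + 1 - 2 - r by omega, show k + 1 - (r + 1) = k + 1 - 1 - r by omega,
    add_comm]

lemma card_sparseSubsets_zmod_eq_zero [NeZero m] (hm : 3 ≤ m) {r : ℕ} (hr : m < 2 * r) :
    #(sparseSubsets (· + 1) (univ : Finset (ZMod m)) r) = 0 := by
  obtain ⟨k, rfl⟩ : ∃ k, r = k + 1 := ⟨r - 1, by omega⟩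
  rw [card_sparseSubsets_zmod hm, Nat.choose_eq_zero_of_lt (by omega),
    Nat.choose_eq_zero_of_lt (by omega)]

lemma cast_choose_add_choose (j k : ℕ) :
    ((j + 1).choose (k + 1) + j.choose k : ℚ) =
      (j + k + 2) / (j + 1) * (j + 1).choose (k + 1) := by
  have h := Nat.add_one_mul_choose_eq j k
  rify at h ⊢
  field_simp
  linarith

theorem cast_card_sparseSubsets_zmod [NeZero m] (hm : 3 ≤ m) {r : ℕ} (hr : r < m) :
    (#(sparseSubsets (· + 1) (univ : Finset (ZMod m)) r) : ℚ) =
      m / (m - r) * (m - r).choose r := by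
  rcases r with _ | k
  · have : (m : ℚ) ≠ 0 := by positivity
    simp [sparseSubsets_zero, this]
  · obtain ⟨j, rfl⟩ : ∃ j, m = j + k + 2 := ⟨m - k - 2, by omega⟩
    rw [card_sparseSubsets_zmod hm, show j + k + 2 - 1 - k = j + 1 by omega,
      show j + k + 2 - 2 - k = j by omega, show j + k + 2 - (k + 1) = j + 1 by omega]
    push_cast
    rw [cast_choose_add_choose]
    congr 2; ring

end Cyclic

section Equivs

open Equiv

lemma card_perm_forall_apply_eq {α ι : Type*} [Fintype α] [Fintype ι]
    {u v : ι → α} (hu : Injective u) (hv : Injective v) :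
    Nat.card {σ : Perm α // ∀ i, σ (u i) = v i} = (Fintype.card α - Fintype.card ι)! := by
  classical
  let e₀ : Set.range u ≃ Set.range v := (ofInjective u hu).symm.trans (ofInjective v hv)
  have he₀ (i : ι) : (e₀ ⟨u i, i, rfl⟩ : α) = v i := by
    simp [e₀, ofInjective_symm_apply]
  have hcompl (w : ι → α) (hw : Injective w) :
      Fintype.card ↥(Set.range w)ᶜ = Fintype.card α - Fintype.card ι := by
    rw [Fintype.card_compl_set, Set.card_range_of_injective hw]
  let e : {σ : Perm α // ∀ i, σ (u i) = v i} ≃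
      {σ : Perm α // ∀ x : Set.range u, σ x = e₀ x} :=
    subtypeEquivRight fun σ => ⟨fun h => by rintro ⟨-, i, rfl⟩; rw [h, he₀],
      fun h i => (h ⟨u i, i, rfl⟩).trans (he₀ i)⟩
  rw [Nat.card_congr (e.trans (Equiv.Set.compl e₀)), Nat.card_eq_fintype_card,
    Fintype.card_equiv (Fintype.equivOfCardEq (by rw [hcompl u hu, hcompl v hv])), hcompl u hu]

variable {α β γ : Type*}

def prodEquivOfFibers (τ : γ → α ≃ β) : α × γ ≃ β × γ where
  toFun p := (τ p.2 p.1, p.2)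
  invFun q := ((τ q.2).symm q.1, q.2)
  left_inv p := by simp
  right_inv q := by simp

def sndPreservingEquiv :
    {e : α × γ ≃ β × γ // ∀ p, (e p).2 = p.2} ≃ (γ → α ≃ β) where
  toFun e c :=
    { toFun a := (e.1 (a, c)).1
      invFun b := (e.1.symm (b, c)).1
      left_inv a := by
        simp [show ((e.1 (a, c)).1, c) = e.1 (a, c) from Prod.ext rfl (e.2 (a, c)).symm]
      right_inv b := by
        have hc : c = (e.1.symm (b, c)).2 := by simpa using e.2 (e.1.symm (b, c))
        have h : ((e.1.symm (b, c)).1, c) = e.1.symm (b, c) := Prod.ext rfl hc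
        simp [h] }
  invFun τ := ⟨prodEquivOfFibers τ, fun _ => rfl⟩
  left_inv e := Subtype.ext <| Equiv.ext fun p => Prod.ext rfl (e.2 p).symm
  right_inv τ := rfl

lemma card_sndPreserving_and (P : (α × γ ≃ β × γ) → Prop) :
    Nat.card {e : α × γ ≃ β × γ // (∀ p, (e p).2 = p.2) ∧ P e} =
      Nat.card {τ : γ → α ≃ β // P (prodEquivOfFibers τ)} :=
  Nat.card_congr <| (subtypeSubtypeEquivSubtypeInter _ P).symm.trans <|
    subtypeEquiv sndPreservingEquiv fun e => by
      rw [← congrArg Subtype.val (sndPreservingEquiv.symm_apply_apply e)]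
      rfl

lemma card_equiv_pair_forall (R : β → β → Prop) :
    Nat.card {τ : Bool → α ≃ β // ∀ a, R (τ true a) (τ false a)} =
      Nat.card (α ≃ β) * Nat.card {σ : Perm β // ∀ b, R b (σ b)} := by
  rw [← Nat.card_prod]
  refine Nat.card_congr
    { toFun τ := (τ.1 true, ⟨(τ.1 true).symm.trans (τ.1 false), fun b => ?_⟩)
      invFun p := ⟨fun c => cond c p.1 (p.1.trans p.2.1), fun a => by simpa using p.2.2 (p.1 a)⟩
      left_inv τ := Subtype.ext <| funext fun c => by cases c <;> ext <;> simp
      right_inv p := by ext <;> simp }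
  simpa using τ.2 ((τ.1 true).symm b)

end Equivs

section Seats

variable {n : ℕ}

def nextSeat : ZMod n × Bool → ZMod n × Bool
  | (j, false) => (j, true)
  | (j, true) => (j + 1, false)

@[simp] lemma nextSeat_false (j : ZMod n) : nextSeat (j, false) = (j, true) := rfl

@[simp] lemma nextSeat_true (j : ZMod n) : nextSeat (j, true) = (j + 1, false) := rfl

lemma nextSeat_snd (x : ZMod n × Bool) : (nextSeat x).2 = !x.2 := by
  obtain ⟨j, _ | _⟩ := x <;> rfl

def seatIndex (x : ZMod n × Bool) : ℕ := 2 * x.1.val + x.2.toNat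

variable [NeZero n]

lemma seatIndex_lt (x : ZMod n × Bool) : seatIndex x < 2 * n := by
  have := ZMod.val_lt x.1
  have := Bool.toNat_le x.2
  unfold seatIndex
  omega

lemma seatIndex_injective : Injective (seatIndex (n := n)) := by
  rintro ⟨j, b⟩ ⟨j', b'⟩ h
  have := Bool.toNat_le b
  have := Bool.toNat_le b'
  simp only [seatIndex] at h
  have hj : j.val = j'.val := by omega
  have hb : b.toNat = b'.toNat := by omega
  rw [ZMod.val_injective n hj]
  cases b <;> cases b' <;> simp_all

lemma card_zmod_prod_bool : Fintype.card (ZMod n × Bool) = 2 * n := by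
  rw [Fintype.card_prod, ZMod.card, Fintype.card_bool, mul_comm]

lemma bijective_cast_seatIndex :
    Bijective fun x : ZMod n × Bool => (seatIndex x : ZMod (2 * n)) := by
  refine (Fintype.bijective_iff_injective_and_card _).2 ⟨fun x y h => ?_, ?_⟩
  · apply seatIndex_injective
    simpa [ZMod.val_natCast_of_lt (seatIndex_lt _)] using congrArg ZMod.val h
  · rw [card_zmod_prod_bool, ZMod.card]

noncomputable def seat : ZMod n × Bool ≃ ZMod (2 * n) :=
  Equiv.ofBijective _ bijective_cast_seatIndex

lemma seat_apply (x : ZMod n × Bool) : seat x = (seatIndex x : ZMod (2 * n)) := rfl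

lemma seat_nextSeat (x : ZMod n × Bool) : seat (nextSeat x) = seat x + 1 := by
  obtain ⟨j, _ | _⟩ := x
  · simp [seat_apply, seatIndex]
  · have hval : 2 * (j + 1).val = 2 * (j.val + 1) % (2 * n) := by
      rw [Nat.mul_mod_mul_left, ZMod.val_add, ZMod.val_one_eq_one_mod, Nat.add_mod_mod]
    simp only [seat_apply, seatIndex, nextSeat_true, Bool.toNat_false, add_zero, hval,
      ZMod.natCast_mod, Bool.toNat_true]
    push_cast
    ring

lemma seat_symm_add_one (s : ZMod (2 * n)) : seat.symm (s + 1) = nextSeat (seat.symm s) := by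
  rw [Equiv.symm_apply_eq, seat_nextSeat, Equiv.apply_symm_apply]

lemma seatAdj_seat_iff (x y : ZMod n × Bool) :
    SeatAdj (seat x) (seat y) ↔ x = nextSeat y ∨ y = nextSeat x := by
  simp only [SeatAdj, ← seat_nextSeat, Equiv.apply_eq_iff_eq]

end Seats

section Rooks

open Equiv

variable {n : ℕ}

def cell : ZMod n × Bool → ZMod n × ZMod n
  | (j, false) => (j, j)
  | (j, true) => (j, j + 1)

lemma eq_or_eq_nextSeat_of_cell_fst_eq {x y : ZMod n × Bool} (h : (cell x).1 = (cell y).1) :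
    x = y ∨ y = nextSeat x ∨ x = nextSeat y := by
  obtain ⟨j, _ | _⟩ := x <;> obtain ⟨j', _ | _⟩ := y <;> simp_all [cell]

lemma eq_or_eq_nextSeat_of_cell_snd_eq {x y : ZMod n × Bool} (h : (cell x).2 = (cell y).2) :
    x = y ∨ y = nextSeat x ∨ x = nextSeat y := by
  obtain ⟨j, _ | _⟩ := x <;> obtain ⟨j', _ | _⟩ := y <;> simp_all [cell]

lemma not_apply_cell_and_apply_cell_nextSeat (hn : 1 < n) (σ : Perm (ZMod n))
    (x : ZMod n × Bool) :
    ¬ (σ (cell x).1 = (cell x).2 ∧ σ (cell (nextSeat x)).1 = (cell (nextSeat x)).2) := by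
  have : Fact (1 < n) := ⟨hn⟩
  obtain ⟨j, _ | _⟩ := x <;> rintro ⟨h₁, h₂⟩ <;> simp only [cell, nextSeat] at h₁ h₂
  · simp [h₁] at h₂
  · simpa using σ.injective (h₁.trans h₂.symm)

variable [NeZero n]

def menagePerms (n : ℕ) [NeZero n] : Finset (Perm (ZMod n)) :=
  {σ | ∀ x, σ (cell x).1 ≠ (cell x).2}

lemma card_perm_forall_mem_apply_cell (hn : 1 < n) (T : Finset (ZMod n × Bool)) :
    #{σ : Perm (ZMod n) | ∀ x ∈ T, σ (cell x).1 = (cell x).2} =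
      if ∀ x ∈ T, nextSeat x ∉ T then (n - #T)! else 0 := by
  split_ifs with hT
  · have hinj (c : ZMod n × ZMod n → ZMod n)
        (hc : ∀ x y, c (cell x) = c (cell y) → x = y ∨ y = nextSeat x ∨ x = nextSeat y) :
        Injective fun x : T => c (cell x) := by
      rintro ⟨x, hx⟩ ⟨y, hy⟩ h
      rcases hc x y h with h | rfl | rfl
      · exact Subtype.ext h
      · exact absurd hy (hT x hx)
      · exact absurd hx (hT y hy)
    have := card_perm_forall_apply_eq (hinj _ fun x y => eq_or_eq_nextSeat_of_cell_fst_eq)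
      (hinj _ fun x y => eq_or_eq_nextSeat_of_cell_snd_eq)
    rw [ZMod.card, Fintype.card_coe] at this
    rw [← this, ← Fintype.card_subtype, ← Nat.card_eq_fintype_card]
    exact Nat.card_congr <|
      subtypeEquivRight fun σ => ⟨fun h x => h x x.2, fun h x hx => h ⟨x, hx⟩⟩
  · push Not at hT
    obtain ⟨x, hx, hcx⟩ := hT
    rw [Finset.card_eq_zero, filter_eq_empty_iff]
    exact fun σ _ h => not_apply_cell_and_apply_cell_nextSeat hn σ x ⟨h x hx, h _ hcx⟩

theorem card_menagePerms_eq_sum (hn : 1 < n) :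
    (#(menagePerms n) : ℤ) =
      ∑ r ∈ range (2 * n + 1),
        (-1 : ℤ) ^ r * #(sparseSubsets (nextSeat (n := n)) univ r) * (n - r)! := by
  let S (x : ZMod n × Bool) : Finset (Perm (ZMod n)) := {σ | σ (cell x).1 = (cell x).2}
  have hIE := inclusion_exclusion_card_inf_compl univ S
  have hcompl : univ.inf (fun x => (S x)ᶜ) = menagePerms n := by
    ext σ; simp [S, mem_inf, menagePerms]
  have hinf (T : Finset (ZMod n × Bool)) :
      T.inf S = ({σ : Perm (ZMod n) | ∀ x ∈ T, σ (cell x).1 = (cell x).2} : Finset _) := by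
    ext σ; simp [S, mem_inf]
  rw [hcompl] at hIE
  rw [hIE, sum_powerset, Finset.card_univ, card_zmod_prod_bool]
  refine sum_congr rfl fun r _ => ?_
  calc ∑ T ∈ powersetCard r univ, (-1 : ℤ) ^ #T * #(T.inf S)
      = ∑ T ∈ sparseSubsets nextSeat univ r, (-1 : ℤ) ^ r * (n - r)! := by
        rw [sparseSubsets, sum_filter]
        refine sum_congr rfl fun T hT => ?_
        rw [hinf, card_perm_forall_mem_apply_cell hn, (mem_powersetCard.1 hT).2]
        split_ifs <;> simp
    _ = (-1) ^ r * #(sparseSubsets (nextSeat (n := n)) univ r) * (n - r)! := by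
        rw [sum_const, nsmul_eq_mul]
        ring

lemma card_sparseSubsets_nextSeat (r : ℕ) :
    #(sparseSubsets (nextSeat (n := n)) univ r) =
      #(sparseSubsets (· + 1) (univ : Finset (ZMod (2 * n))) r) := by
  rw [← image_univ_equiv seat, card_sparseSubsets_image seat.injective]
  intro x _ y _
  rw [← seat_nextSeat, seat.apply_eq_iff_eq]

theorem cast_card_menagePerms (hn : 1 < n) :
    (#(menagePerms n) : ℚ) =
      ∑ r ∈ range (n + 1),
        (-1 : ℚ) ^ r * (2 * n / (2 * n - r)) * (2 * n - r).choose r * (n - r)! := by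
  have h := congrArg (Int.cast : ℤ → ℚ) (card_menagePerms_eq_sum hn)
  push_cast at h
  rw [h, ← sum_subset (range_subset_range.2 (by omega : n + 1 ≤ 2 * n + 1))]
  · refine sum_congr rfl fun r hr => ?_
    rw [card_sparseSubsets_nextSeat, cast_card_sparseSubsets_zmod (by omega) (by simp at hr; omega)]
    push_cast
    ring
  · intro r _ hr
    rw [card_sparseSubsets_nextSeat,
      card_sparseSubsets_zmod_eq_zero (by omega) (by simp at hr; omega)]
    simp

end Rooks

section Seatings

open Equiv

variable {n : ℕ}

def Alternating (f : Fin n × Bool ≃ ZMod (2 * n)) : Prop :=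
  ∀ p q, SeatAdj (f p) (f q) → p.2 ≠ q.2

def PartnersApart (f : Fin n × Bool ≃ ZMod (2 * n)) : Prop :=
  ∀ i : Fin n, ¬ SeatAdj (f (i, true)) (f (i, false))

lemma partnersApart_comp_swap_iff (f : Fin n × Bool ≃ ZMod (2 * n)) :
    PartnersApart ((prodCongr (Equiv.refl _) boolNot).trans f) ↔ PartnersApart f := by
  simp only [PartnersApart, trans_apply, prodCongr_apply, Prod.map, coe_refl, id, boolNot_apply,
    Bool.not_true, Bool.not_false, SeatAdj, or_comm]

variable [NeZero n]

lemma alternating_iff (f : Fin n × Bool ≃ ZMod (2 * n)) :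
    Alternating f ↔ ∃ b, ∀ p, (seat.symm (f p)).2 = xor p.2 b := by
  constructor
  · intro hf
    have hg (s : ZMod (2 * n)) :
        xor (f.symm (s + 1)).2 (seat.symm (s + 1)).2 = xor (f.symm s).2 (seat.symm s).2 := by
      have h := hf (f.symm (s + 1)) (f.symm s) (by simp [SeatAdj])
      rw [seat_symm_add_one, nextSeat_snd]
      revert h
      cases (f.symm (s + 1)).2 <;> cases (f.symm s).2 <;> simp
    refine ⟨xor (f.symm 0).2 ((seat (n := n)).symm 0).2, fun p => ?_⟩
    have h := ZMod.apply_eq_apply_zero (g := fun s => xor (f.symm s).2 (seat.symm s).2) hg (f p)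
    rw [symm_apply_apply] at h
    rw [← h]
    cases p.2 <;> simp
  · rintro ⟨b, hb⟩ p q hpq
    rw [← seat.apply_symm_apply (f p), ← seat.apply_symm_apply (f q), seatAdj_seat_iff] at hpq
    have h : (seat.symm (f p)).2 ≠ (seat.symm (f q)).2 := by
      rcases hpq with h | h <;> simp [h, nextSeat_snd]
    rw [hb, hb] at h
    exact fun hpq => h (by rw [hpq])

lemma card_alternating_partnersApart :
    Nat.card {f : Fin n × Bool ≃ ZMod (2 * n) // Alternating f ∧ PartnersApart f} =
      2 * Nat.card {f : Fin n × Bool ≃ ZMod (2 * n) //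
        (∀ p, (seat.symm (f p)).2 = p.2) ∧ PartnersApart f} := by
  classical
  let Q (b : Bool) (f : Fin n × Bool ≃ ZMod (2 * n)) : Prop :=
    (∀ p, (seat.symm (f p)).2 = xor p.2 b) ∧ PartnersApart f
  have hdisj : Disjoint (Q false) (Q true) := by
    intro r hf ht f hr
    have h₁ := (hf f hr).1 (⟨0, NeZero.pos n⟩, false)
    have h₂ := (ht f hr).1 (⟨0, NeZero.pos n⟩, false)
    simp_all
  let swap : (Fin n × Bool ≃ ZMod (2 * n)) ≃ (Fin n × Bool ≃ ZMod (2 * n)) :=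
    equivCongr (prodCongr (Equiv.refl _) boolNot) (Equiv.refl _)
  have hswap : {f // Q true f} ≃ {f // Q false f} := subtypeEquiv swap fun f => by
    refine and_congr ⟨fun h ⟨i, c⟩ => ?_, fun h ⟨i, c⟩ => ?_⟩
      (partnersApart_comp_swap_iff f).symm
    · simpa [swap] using h (i, !c)
    · simpa [swap] using h (i, !c)
  rw [Nat.card_congr (subtypeEquivRight fun f => by
      rw [alternating_iff, Bool.exists_bool, or_and_right] : _ ≃ {f // Q false f ∨ Q true f}),
    Nat.card_congr (subtypeOrEquiv _ _ hdisj), Nat.card_sum, Nat.card_congr hswap, ← two_mul]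
  simp [Q]

lemma partnersApart_prodEquivOfFibers_trans_seat_iff (τ : Bool → Fin n ≃ ZMod n) :
    PartnersApart ((prodEquivOfFibers τ).trans seat) ↔
      ∀ i, ¬ (τ true i = τ false i ∨ τ false i = τ true i + 1) := by
  simp [PartnersApart, prodEquivOfFibers, seatAdj_seat_iff]

lemma card_parity_eq_gender_and_partnersApart :
    Nat.card {f : Fin n × Bool ≃ ZMod (2 * n) //
        (∀ p, (seat.symm (f p)).2 = p.2) ∧ PartnersApart f} =
      n ! * #(menagePerms n) := by
  have hseat : {f : Fin n × Bool ≃ ZMod (2 * n) //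
        (∀ p, (seat.symm (f p)).2 = p.2) ∧ PartnersApart f} ≃
      {e : Fin n × Bool ≃ ZMod n × Bool //
        (∀ p, (e p).2 = p.2) ∧ PartnersApart (e.trans seat)} :=
    subtypeEquiv (equivCongr (Equiv.refl _) seat).symm fun f => by simp [trans_assoc]
  rw [Nat.card_congr hseat, card_sndPreserving_and, Nat.card_congr
    (subtypeEquivRight partnersApart_prodEquivOfFibers_trans_seat_iff),
    card_equiv_pair_forall fun k j : ZMod n => ¬ (k = j ∨ j = k + 1),
    Nat.card_eq_fintype_card (α := Fin n ≃ ZMod n), Fintype.card_equiv (ZMod.finEquiv n).toEquiv,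
    Fintype.card_fin, menagePerms, ← Fintype.card_subtype, ← Nat.card_eq_fintype_card]
  congr 1
  refine Nat.card_congr (subtypeEquivRight fun σ => ?_)
  simp [Prod.forall, Bool.forall_bool, cell, eq_comm]

end Seatings

end Menage

/-- For `n ≥ 2`, the number of ways to seat `n` man-woman couples (person `(i, g)` is the
member of gender `g` of couple `i`) at a circular table with `2n` labeled seats so that
genders alternate and no one sits adjacent to their partner equals
`2·n! · ∑_{r=0}^{n} (−1)^r · (2n/(2n−r)) · C(2n−r, r) · (n−r)!`. -/
theorem menage_seatings (n : ℕ) (hn : 2 ≤ n) :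
    (Nat.card {f : (Fin n × Bool) ≃ ZMod (2 * n) //
        (∀ p q, SeatAdj (f p) (f q) → p.2 ≠ q.2) ∧
        (∀ i : Fin n, ¬ SeatAdj (f (i, true)) (f (i, false)))} : ℚ) =
      2 * Nat.factorial n *
        ∑ r ∈ Finset.range (n + 1),
          (-1 : ℚ) ^ r * (2 * n / ((2 * n : ℚ) - r)) * Nat.choose (2 * n - r) r *
            Nat.factorial (n - r) := by
  have : NeZero n := ⟨by omega⟩
  change (Nat.card {f // Menage.Alternating f ∧ Menage.PartnersApart f} : ℚ) = _
  rw [Menage.card_alternating_partnersApart, Menage.card_parity_eq_gender_and_partnersApart]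
  push_cast
  rw [Menage.cast_card_menagePerms hn]
  ring
end

section
/- For n ≥ 2 and 0 ≤ r ≤ n, the number of pairs (D, σ), where D is a set of r non-overlapping dominoes on the cycle of 2n seats each covering a fixed woman's seat and an adjacent empty seat, and σ is a seating of the n men into the n empty seats such that for each domino in D the man seated in its empty seat is the partner of the woman in its other seat, equals (2n/(2n−r)) · C(2n−r, r) · (n−r)!. -/
/-!
The dominoes of `D` are recorded by their starting seats, which form an `r`-subset of the
`2n`-cycle with no two cyclically consecutive elements. Distinct non-overlapping dominoes cover
distinct women and distinct odd seats, so each fixes one value of `σ` independently, and the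
seatings compatible with `D` are the bijections between the `n - r` remaining men and seats.
Splitting on whether `0 ∈ D` reduces the number of such `D` to the linear count `C(k + 1 - r, r)`
of `r`-subsets of `{0, …, k - 1}` without consecutive elements: for a cycle of length `m` it is
`C(m - r, r) + C(m - r - 1, r - 1) = m / (m - r) · C(m - r, r)`.
-/

open Finset

/-- Women sit at the even seats of the `2n`-cycle, woman `w` at seat `2w`.  A domino is
encoded by its starting seat `i`, covering the adjacent seats `i` and `i+1` (thus one even
seat, holding a woman, and one odd, empty, seat).  `DominoForced n D σ` says that for every
domino in `D`, the man seated (by `σ`) in its odd seat is the partner of the woman seated in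
its even seat (man `w`'s partner is woman `w`). -/
def DominoForced (n : ℕ) (D : Finset (ZMod (2 * n)))
    (σ : ZMod n ≃ {s : ZMod (2 * n) // Odd s.val}) : Prop :=
  ∀ i ∈ D,
    if Even i.val then
      ((σ ((i.val / 2 : ℕ) : ZMod n) : {s : ZMod (2 * n) // Odd s.val}) : ZMod (2 * n)) = i + 1
    else
      ((σ (((i + 1 : ZMod (2 * n)).val / 2 : ℕ) : ZMod n) :
        {s : ZMod (2 * n) // Odd s.val}) : ZMod (2 * n)) = i

lemma card_equiv_extending {α β : Type*} [Finite α] [Finite β] {s : Set α} {t : Set β}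
    (e₀ : s ≃ t) (hcard : Nat.card α = Nat.card β) :
    Nat.card {σ : α ≃ β // ∀ x : s, σ x = e₀ x} = (Nat.card α - s.ncard).factorial := by
  classical
  have hst : s.ncard = t.ncard := by
    rw [← Nat.card_coe_set_eq, ← Nat.card_coe_set_eq, Nat.card_congr e₀]
  obtain ⟨e⟩ : Nonempty (↥sᶜ ≃ ↥tᶜ) := by
    rw [← Finite.card_eq, Nat.card_coe_set_eq, Nat.card_coe_set_eq, Set.ncard_compl,
      Set.ncard_compl, hcard, hst]
  rw [Nat.card_congr ((Equiv.Set.compl e₀).trans (Equiv.equivCongr (Equiv.refl _) e.symm)),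
    Nat.card_perm, Nat.card_coe_set_eq, Set.ncard_compl]

lemma card_equiv_apply_eq_on {α β γ : Type*} [Finite α] [Finite β]
    (hcard : Nat.card α = Nat.card β) (D : Finset γ) {f : γ → α} {g : γ → β}
    (hf : Set.InjOn f D) (hg : Set.InjOn g D) :
    Nat.card {σ : α ≃ β // ∀ i ∈ D, σ (f i) = g i} = (Nat.card α - #D).factorial := by
  let e₀ : f '' D ≃ g '' D :=
    (Equiv.Set.imageOfInjOn f D hf).symm.trans (Equiv.Set.imageOfInjOn g D hg)
  have he₀ (i : γ) (hi : i ∈ D) : (e₀ ⟨f i, i, hi, rfl⟩ : β) = g i := by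
    have : (Equiv.Set.imageOfInjOn f D hf).symm ⟨f i, i, hi, rfl⟩ = ⟨i, hi⟩ :=
      (Equiv.symm_apply_eq _).mpr rfl
    simp only [e₀, Equiv.trans_apply, this]
    rfl
  have : {σ : α ≃ β // ∀ i ∈ D, σ (f i) = g i} ≃ {σ : α ≃ β // ∀ x : f '' D, σ x = e₀ x} :=
    Equiv.subtypeEquivRight fun σ => by
      refine ⟨?_, fun H i hi => (H ⟨f i, i, hi, rfl⟩).trans (he₀ i hi)⟩
      rintro H ⟨_, i, hi, rfl⟩
      exact (H i hi).trans (he₀ i hi).symm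
  rw [Nat.card_congr this, card_equiv_extending e₀ hcard, hf.ncard_image,
    Set.ncard_coe_finset]

lemma Set.injOn_of_eq_imp_adjacent {α β : Type*} [Add α] [One α] {D : Set α}
    (hD : ∀ i ∈ D, i + 1 ∉ D) {f : α → β}
    (hf : ∀ x y, f x = f y → x = y ∨ x + 1 = y ∨ y + 1 = x) : Set.InjOn f D := by
  intro x hx y hy hxy
  rcases hf x y hxy with h | rfl | rfl
  · exact h
  · exact absurd hy (hD x hx)
  · exact absurd hx (hD y hy)

def sparseSubsets (s : Finset ℕ) (r : ℕ) : Finset (Finset ℕ) :=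
  (s.powersetCard r).filter fun S => ∀ i ∈ S, i + 1 ∉ S

lemma mem_sparseSubsets {s S : Finset ℕ} {r : ℕ} :
    S ∈ sparseSubsets s r ↔ S ⊆ s ∧ #S = r ∧ ∀ i ∈ S, i + 1 ∉ S := by
  simp [sparseSubsets, and_assoc]

lemma card_sparseSubsets_Ico (a b r : ℕ) :
    #(sparseSubsets (Ico a b) r) = #(sparseSubsets (range (b - a)) r) := by
  have hIco : Ico a b = (range (b - a)).map (addLeftEmbedding a) := by
    rw [range_eq_Ico, map_add_left_Ico]
    ext x
    simp only [mem_Ico]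
    omega
  rw [hIco, sparseSubsets, powersetCard_map, filter_map, card_map]
  congr 2
  ext S
  simp [add_assoc]

lemma filter_notMem_sparseSubsets_Ico (a b r : ℕ) :
    (sparseSubsets (Ico a b) r).filter (a ∉ ·) = sparseSubsets (Ico (a + 1) b) r := by
  ext S
  simp only [mem_filter, mem_sparseSubsets]
  constructor
  · rintro ⟨⟨hS, hcard, hsparse⟩, ha⟩
    refine ⟨fun x hx => ?_, hcard, hsparse⟩
    have := mem_Ico.mp (hS hx)
    have : x ≠ a := by rintro rfl; exact ha hx
    simp only [mem_Ico]; omega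
  · rintro ⟨hS, hcard, hsparse⟩
    refine ⟨⟨fun x hx => ?_, hcard, hsparse⟩, fun ha => ?_⟩
    · have := mem_Ico.mp (hS hx)
      simp only [mem_Ico]; omega
    · have := mem_Ico.mp (hS ha); omega

lemma card_filter_mem_sparseSubsets_Ico {a b : ℕ} (hab : a < b) (r : ℕ) :
    #((sparseSubsets (Ico a b) (r + 1)).filter (a ∈ ·)) = #(sparseSubsets (Ico (a + 2) b) r) := by
  apply card_nbij' (fun S => S.erase a) (insert a)
  · intro S
    simp only [coe_filter, Set.mem_ofPred_eq, mem_coe, mem_sparseSubsets]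
    rintro ⟨⟨hS, hcard, hsparse⟩, ha⟩
    refine ⟨fun x hx => ?_, by rw [card_erase_of_mem ha, hcard]; rfl,
      fun i hi hi1 => hsparse i (mem_of_mem_erase hi) (mem_of_mem_erase hi1)⟩
    have := mem_Ico.mp (hS (mem_of_mem_erase hx))
    have : x ≠ a + 1 := by rintro rfl; exact hsparse a ha (mem_of_mem_erase hx)
    have := ne_of_mem_erase hx
    simp only [mem_Ico]; omega
  · intro T
    simp only [coe_filter, Set.mem_ofPred_eq, mem_coe, mem_sparseSubsets]
    rintro ⟨hT, hcard, hsparse⟩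
    have haT : a ∉ T := fun ha => by have := mem_Ico.mp (hT ha); omega
    refine ⟨⟨insert_subset (mem_Ico.mpr ⟨le_rfl, hab⟩) (hT.trans (Ico_subset_Ico_left (by omega))),
      by rw [card_insert_of_notMem haT, hcard], fun i hi hi1 => ?_⟩, mem_insert_self a T⟩
    rcases mem_insert.mp hi with rfl | hi <;> rcases mem_insert.mp hi1 with h | hi1
    · omega
    · have := mem_Ico.mp (hT hi1); omega
    · have := mem_Ico.mp (hT hi); omega
    · exact hsparse i hi hi1
  · intro S hS
    exact insert_erase (mem_filter.mp hS).2
  · intro T hT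
    refine erase_insert fun ha => ?_
    have := mem_Ico.mp ((mem_sparseSubsets.mp hT).1 ha); omega

lemma card_sparseSubsets_range_succ (k r : ℕ) :
    #(sparseSubsets (range (k + 1)) (r + 1)) =
      #(sparseSubsets (range k) (r + 1)) + #(sparseSubsets (range (k - 1)) r) := by
  rw [range_eq_Ico, ← card_filter_add_card_filter_not (p := (0 ∈ ·)),
    card_filter_mem_sparseSubsets_Ico (Nat.zero_lt_succ k), filter_notMem_sparseSubsets_Ico,
    card_sparseSubsets_Ico, card_sparseSubsets_Ico, add_comm, show k + 1 - (0 + 1) = k by omega,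
    show k + 1 - (0 + 2) = k - 1 by omega]

lemma card_sparseSubsets_range (k r : ℕ) :
    #(sparseSubsets (range k) r) = (k + 1 - r).choose r := by
  induction k using Nat.strong_induction_on generalizing r with
  | _ k ih =>
    rcases r with _ | r
    · simp [sparseSubsets, filter_singleton]
    rcases k with _ | k
    · simp [sparseSubsets]
    rw [card_sparseSubsets_range_succ, ih k k.lt_succ_self, ih (k - 1) (by omega)]
    rcases Nat.lt_or_ge k r with hkr | hrk
    · rw [Nat.choose_eq_zero_of_lt (by omega), Nat.choose_eq_zero_of_lt (by omega),
        Nat.choose_eq_zero_of_lt (by omega)]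
    · rcases k.eq_zero_or_pos with rfl | hk
      · obtain rfl : r = 0 := by omega
        rfl
      rw [show k + 1 + 1 - (r + 1) = (k - r) + 1 by omega, Nat.choose_succ_succ',
        show k - 1 + 1 - r = k - r by omega, show k + 1 - (r + 1) = k - r by omega, add_comm]

lemma ZMod.add_one_eq_iff {m : ℕ} [NeZero m] {x y : ZMod m} :
    x + 1 = y ↔ y.val = x.val + 1 ∨ (x.val + 1 = m ∧ y.val = 0) := by
  have hx := x.val_lt
  have hy := y.val_lt
  rw [← ZMod.natCast_zmod_val x, ← ZMod.natCast_zmod_val y, ← Nat.cast_add_one,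
    ZMod.natCast_eq_natCast_iff', Nat.mod_eq_of_lt hy, ZMod.val_natCast, ZMod.val_natCast,
    Nat.mod_eq_of_lt hx, Nat.mod_eq_of_lt hy]
  rcases Nat.lt_or_ge (x.val + 1) m with hlt | hge
  · rw [Nat.mod_eq_of_lt hlt]; omega
  · rw [show x.val + 1 = m by omega, Nat.mod_self]; omega

lemma ZMod.forall_add_one_notMem_iff {m : ℕ} [NeZero m] (D : Finset (ZMod m)) :
    (∀ i ∈ D, i + 1 ∉ D) ↔
      (∀ a ∈ D.image ZMod.val, a + 1 ∉ D.image ZMod.val) ∧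
        ¬(0 ∈ D.image ZMod.val ∧ m - 1 ∈ D.image ZMod.val) := by
  have hm := NeZero.pos m
  refine ⟨fun h => ⟨?_, ?_⟩, ?_⟩
  · intro a ha ha1
    obtain ⟨i, hi, rfl⟩ := mem_image.mp ha
    obtain ⟨j, hj, hji⟩ := mem_image.mp ha1
    exact h i hi (ZMod.add_one_eq_iff.mpr (Or.inl hji) ▸ hj)
  · rintro ⟨h0, hm1⟩
    obtain ⟨j, hj, hj0⟩ := mem_image.mp h0
    obtain ⟨i, hi, him⟩ := mem_image.mp hm1
    have hij : i + 1 = j := ZMod.add_one_eq_iff.mpr (Or.inr ⟨by omega, hj0⟩)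
    exact h i hi (hij ▸ hj)
  · rintro ⟨h1, h2⟩ i hi hi1
    rcases ZMod.add_one_eq_iff.mp (rfl : i + 1 = i + 1) with h | ⟨htop, h0⟩
    · exact h1 _ (mem_image_of_mem _ hi) (h ▸ mem_image_of_mem _ hi1)
    · refine h2 ⟨h0 ▸ mem_image_of_mem _ hi1, ?_⟩
      rw [show m - 1 = i.val by omega]
      exact mem_image_of_mem _ hi

lemma ZMod.image_val_image_natCast {m : ℕ} [NeZero m] {S : Finset ℕ} (hS : S ⊆ range m) :
    (S.image (Nat.cast : ℕ → ZMod m)).image ZMod.val = S := by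
  rw [image_image]
  exact (image_congr fun a ha => ZMod.val_cast_of_lt (mem_range.mp (hS ha))).trans image_id'

def cyclicSparseSubsets (m : ℕ) [NeZero m] (r : ℕ) : Finset (Finset (ZMod m)) :=
  {D | #D = r ∧ ∀ i ∈ D, i + 1 ∉ D}

lemma card_cyclicSparseSubsets_eq_card_filter (m r : ℕ) [NeZero m] :
    #(cyclicSparseSubsets m r) =
      #((sparseSubsets (range m) r).filter fun S => ¬(0 ∈ S ∧ m - 1 ∈ S)) := by
  have hval := ZMod.val_injective m
  apply card_nbij (fun D => D.image ZMod.val)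
  · intro D
    simp only [cyclicSparseSubsets, coe_filter, Set.mem_ofPred_eq, mem_univ, true_and,
      mem_sparseSubsets, ZMod.forall_add_one_notMem_iff]
    rintro ⟨hcard, hsparse, hwrap⟩
    refine ⟨⟨fun a ha => ?_, by rw [card_image_of_injective _ hval, hcard], hsparse⟩, hwrap⟩
    obtain ⟨x, -, rfl⟩ := mem_image.mp ha
    exact mem_range.mpr x.val_lt
  · exact (image_injective hval).injOn
  · intro S
    simp only [coe_filter, Set.mem_ofPred_eq, mem_sparseSubsets]
    rintro ⟨⟨hS, hcard, hsparse⟩, hwrap⟩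
    have hS' := ZMod.image_val_image_natCast hS
    refine ⟨S.image Nat.cast, ?_, hS'⟩
    simp only [cyclicSparseSubsets, coe_filter, mem_univ, true_and, Set.mem_ofPred_eq]
    refine ⟨?_, ?_⟩
    · rw [← card_image_of_injective _ hval, hS', hcard]
    · rw [ZMod.forall_add_one_notMem_iff, hS']
      exact ⟨hsparse, hwrap⟩

lemma card_filter_sparseSubsets_range_not_wrap {m : ℕ} (hm : 2 ≤ m) (r : ℕ) :
    #((sparseSubsets (range m) (r + 1)).filter fun S => ¬(0 ∈ S ∧ m - 1 ∈ S)) =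
      #(sparseSubsets (range (m - 1)) (r + 1)) + #(sparseSubsets (range (m - 3)) r) := by
  rw [← card_filter_add_card_filter_not (p := (0 ∉ ·)), filter_filter, filter_filter]
  have hfree : (sparseSubsets (range m) (r + 1)).filter (fun S => ¬(0 ∈ S ∧ m - 1 ∈ S) ∧ 0 ∉ S) =
      sparseSubsets (Ico 1 m) (r + 1) := by
    rw [← filter_notMem_sparseSubsets_Ico, range_eq_Ico]
    exact filter_congr fun S _ => by tauto
  have hzero : (sparseSubsets (range m) (r + 1)).filter
      (fun S => ¬(0 ∈ S ∧ m - 1 ∈ S) ∧ ¬0 ∉ S) =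
      (sparseSubsets (Ico 0 (m - 1)) (r + 1)).filter (0 ∈ ·) := by
    ext S
    simp only [mem_filter, mem_sparseSubsets, not_and, not_not]
    constructor
    · rintro ⟨⟨hS, hcard, hsparse⟩, hwrap, h0⟩
      refine ⟨⟨fun x hx => ?_, hcard, hsparse⟩, h0⟩
      have := mem_range.mp (hS hx)
      have : x ≠ m - 1 := by rintro rfl; exact hwrap h0 hx
      exact mem_Ico.mpr ⟨x.zero_le, by omega⟩
    · rintro ⟨⟨hS, hcard, hsparse⟩, h0⟩
      refine ⟨⟨fun x hx => mem_range.mpr ?_, hcard, hsparse⟩, fun _ hm1 => ?_, h0⟩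
      · have := mem_Ico.mp (hS hx); omega
      · have := mem_Ico.mp (hS hm1); omega
  rw [hfree, hzero, card_filter_mem_sparseSubsets_Ico (by omega), card_sparseSubsets_Ico,
    card_sparseSubsets_Ico, show m - 1 - (0 + 2) = m - 3 by omega]

theorem sub_mul_card_cyclicSparseSubsets (m r : ℕ) [NeZero m] (hm : 2 ≤ m) :
    (m - r) * #(cyclicSparseSubsets m r) = m * (m - r).choose r := by
  rw [card_cyclicSparseSubsets_eq_card_filter]
  rcases r with _ | r
  · simp [sparseSubsets, filter_singleton]
  rw [card_filter_sparseSubsets_range_not_wrap hm, card_sparseSubsets_range,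
    card_sparseSubsets_range, show m - 1 + 1 - (r + 1) = m - (r + 1) by omega]
  rcases Nat.eq_zero_or_pos (m - (r + 1)) with h | h
  · rw [h, Nat.choose_eq_zero_of_lt (by omega)]
    simp
  obtain ⟨j, hj⟩ : ∃ j, m - (r + 1) = j + 1 := ⟨_, (Nat.succ_pred_eq_of_pos h).symm⟩
  have hc : (m - 3 + 1 - r).choose r = j.choose r := by
    rcases r with _ | r
    · simp
    · congr 1; omega
  rw [hj, hc, mul_add, Nat.add_one_mul_choose_eq, show m = j + 1 + (r + 1) by omega]
  ring

section Domino

variable {n : ℕ} [NeZero n]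

lemma card_subtype_odd_val : Nat.card {s : ZMod (2 * n) // Odd s.val} = n := by
  have hval (k : ZMod n) : ((2 * k.val + 1 : ℕ) : ZMod (2 * n)).val = 2 * k.val + 1 :=
    ZMod.val_cast_of_lt (by have := k.val_lt; omega)
  let f (k : ZMod n) : {s : ZMod (2 * n) // Odd s.val} :=
    ⟨((2 * k.val + 1 : ℕ) : ZMod (2 * n)), by rw [hval]; exact odd_two_mul_add_one _⟩
  have hf : Function.Bijective f := by
    refine ⟨fun k l hkl => ?_, ?_⟩
    · have := congrArg (fun s : {s : ZMod (2 * n) // Odd s.val} => (s : ZMod (2 * n)).val) hkl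
      simp only [f, hval] at this
      exact ZMod.val_injective n (by omega)
    · rintro ⟨s, k, hk⟩
      have hkn : k < n := by have := s.val_lt; omega
      refine ⟨k, Subtype.ext ?_⟩
      simp only [f]
      rw [ZMod.val_cast_of_lt hkn, ← hk, ZMod.natCast_zmod_val]
  rw [← Nat.card_eq_of_bijective f hf, Nat.card_zmod]

/-- Woman `(i + 1) / 2` sits at whichever of the seats `i`, `i + 1` is even; for the
wrap-around domino `i = 2n - 1` this is woman `n ≡ 0`. -/
def dominoWoman (i : ZMod (2 * n)) : ZMod n := ((i.val + 1) / 2 : ℕ)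

lemma val_dominoSeat_lt (i : ZMod (2 * n)) : 2 * (i.val / 2) + 1 < 2 * n := by
  have := i.val_lt; omega

/-- `2 * (i / 2) + 1` is whichever of the seats `i`, `i + 1` is odd. -/
def dominoSeat (i : ZMod (2 * n)) : {s : ZMod (2 * n) // Odd s.val} :=
  ⟨((2 * (i.val / 2) + 1 : ℕ) : ZMod (2 * n)), by
    rw [ZMod.val_cast_of_lt (val_dominoSeat_lt i)]; exact odd_two_mul_add_one _⟩

lemma val_dominoSeat (i : ZMod (2 * n)) :
    (dominoSeat i : ZMod (2 * n)).val = 2 * (i.val / 2) + 1 :=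
  ZMod.val_cast_of_lt (val_dominoSeat_lt i)

lemma coe_dominoSeat (i : ZMod (2 * n)) :
    (dominoSeat i : ZMod (2 * n)) = if Even i.val then i + 1 else i := by
  simp only [dominoSeat]
  split_ifs with he <;> rw [Nat.even_iff] at he <;> conv_rhs => rw [← ZMod.natCast_zmod_val i]
  · rw [← Nat.cast_add_one]; congr 1; omega
  · congr 1; omega

lemma dominoForced_iff {D : Finset (ZMod (2 * n))}
    {σ : ZMod n ≃ {s : ZMod (2 * n) // Odd s.val}} :
    DominoForced n D σ ↔ ∀ i ∈ D, σ (dominoWoman i) = dominoSeat i := by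
  refine forall₂_congr fun i _ => ?_
  rw [Subtype.ext_iff, coe_dominoSeat, dominoWoman]
  split_ifs with he
  · rw [Nat.even_iff] at he
    rw [show (i.val + 1) / 2 = i.val / 2 by omega]
  · rcases ZMod.add_one_eq_iff.mp (rfl : i + 1 = i + 1) with h | ⟨htop, h⟩
    · rw [h]
    · rw [h, htop, Nat.mul_div_cancel_left n two_pos, Nat.zero_div, Nat.cast_zero,
        ZMod.natCast_self]

lemma adjacent_of_dominoSeat_eq {x y : ZMod (2 * n)} (h : dominoSeat x = dominoSeat y) :
    x = y ∨ x + 1 = y ∨ y + 1 = x := by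
  have hxy := congrArg (fun s : {s : ZMod (2 * n) // Odd s.val} => (s : ZMod (2 * n)).val) h
  simp only [val_dominoSeat] at hxy
  rw [ZMod.add_one_eq_iff, ZMod.add_one_eq_iff, ← (ZMod.val_injective _).eq_iff]
  omega

lemma adjacent_of_dominoWoman_eq {x y : ZMod (2 * n)} (h : dominoWoman x = dominoWoman y) :
    x = y ∨ x + 1 = y ∨ y + 1 = x := by
  have hx := x.val_lt
  have hy := y.val_lt
  rw [dominoWoman, dominoWoman, ZMod.natCast_eq_natCast_iff'] at h
  have hxy : (x.val + 1) / 2 = (y.val + 1) / 2 ∨ x.val + 1 = 2 * n ∧ y.val = 0 ∨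
      y.val + 1 = 2 * n ∧ x.val = 0 := by
    have ha : (x.val + 1) / 2 ≤ n := by omega
    have hb : (y.val + 1) / 2 ≤ n := by omega
    rcases ha.lt_or_eq with ha | ha <;> rcases hb.lt_or_eq with hb | hb <;>
      simp only [Nat.mod_eq_of_lt, ha, hb, Nat.mod_self] at h <;> omega
  rw [ZMod.add_one_eq_iff, ZMod.add_one_eq_iff, ← (ZMod.val_injective _).eq_iff]
  omega

lemma card_dominoForced {D : Finset (ZMod (2 * n))} (hD : ∀ i ∈ D, i + 1 ∉ D) :
    Nat.card {σ : ZMod n ≃ {s : ZMod (2 * n) // Odd s.val} // DominoForced n D σ} =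
      (n - #D).factorial := by
  rw [Nat.card_congr (Equiv.subtypeEquivRight fun σ => dominoForced_iff),
    card_equiv_apply_eq_on (by rw [Nat.card_zmod, card_subtype_odd_val]) D
      (Set.injOn_of_eq_imp_adjacent hD fun _ _ => adjacent_of_dominoWoman_eq)
      (Set.injOn_of_eq_imp_adjacent hD fun _ _ => adjacent_of_dominoSeat_eq),
    Nat.card_zmod]

lemma card_dominoPairs (r : ℕ) :
    Nat.card {p : Finset (ZMod (2 * n)) × (ZMod n ≃ {s : ZMod (2 * n) // Odd s.val}) //
        p.1.card = r ∧ (∀ i ∈ p.1, i + 1 ∉ p.1) ∧ DominoForced n p.1 p.2} =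
      #(cyclicSparseSubsets (2 * n) r) * (n - r).factorial := by
  rw [Nat.card_congr (Equiv.subtypeProdEquivSigmaSubtype fun D σ =>
    #D = r ∧ (∀ i ∈ D, i + 1 ∉ D) ∧ DominoForced n D σ), Nat.card_sigma, cyclicSparseSubsets, card_filter,
    sum_mul]
  refine sum_congr rfl fun D _ => ?_
  split_ifs with hD
  · rw [one_mul, Nat.card_congr (Equiv.subtypeEquivRight fun σ =>
      (and_iff_right hD.1).trans (and_iff_right hD.2)), card_dominoForced hD.2, hD.1]
  · rw [zero_mul, Nat.card_eq_zero]
    exact Or.inl ⟨fun ⟨_, h⟩ => hD ⟨h.1, h.2.1⟩⟩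

end Domino

theorem domino_pairs_count_general (n r : ℕ) :
    (2 * n - r) *
      Nat.card {p : Finset (ZMod (2 * n)) × (ZMod n ≃ {s : ZMod (2 * n) // Odd s.val}) //
        p.1.card = r ∧ (∀ i ∈ p.1, i + 1 ∉ p.1) ∧ DominoForced n p.1 p.2} =
      2 * n * Nat.choose (2 * n - r) r * Nat.factorial (n - r) := by
  rcases n.eq_zero_or_pos with rfl | hn
  · simp
  have : NeZero n := ⟨hn.ne'⟩
  rw [card_dominoPairs, ← mul_assoc, sub_mul_card_cyclicSparseSubsets _ _ (by omega)]

/-- For `n ≥ 2` and `0 ≤ r ≤ n`, the number of pairs `(D, σ)`, where `D` is a set of `r`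
non-overlapping dominoes on the `2n`-cycle (each covering a woman's seat and an adjacent
empty seat) and `σ` seats the `n` men into the `n` odd seats so that each domino's odd seat
receives the partner of its woman, equals `(2n/(2n−r)) · C(2n−r, r) · (n−r)!`
(stated with cleared denominators). -/
theorem domino_pairs_count (n r : ℕ) (hn : 2 ≤ n) (hrn : r ≤ n) :
    (2 * n - r) *
      Nat.card {p : Finset (ZMod (2 * n)) × (ZMod n ≃ {s : ZMod (2 * n) // Odd s.val}) //
        p.1.card = r ∧ (∀ i ∈ p.1, i + 1 ∉ p.1) ∧ DominoForced n p.1 p.2} =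
      2 * n * Nat.choose (2 * n - r) r * Nat.factorial (n - r) :=
  domino_pairs_count_general n r
end

section
/- Kaplansky's lemma: the number of ways to choose r elements from {1, 2, …, m} arranged in a cycle such that no two chosen elements are adjacent (with 1 and m adjacent) equals (m/(m−r)) · C(m−r, r), for m ≥ 1 and 0 ≤ r ≤ ⌊m/2⌋. -/
open Finset

def lineSet (n r : ℕ) : Finset (Finset ℕ) :=
  ((Finset.range n).powersetCard r).filter (fun T => ∀ t ∈ T, t + 1 ∉ T)

lemma line_count : ∀ n, ∀ r, (lineSet n r).card = Nat.choose (n + 1 - r) r := by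
  intro n
  induction n using Nat.strong_induction_on with
  | _ n ih =>
    intro r
    match r with
    | 0 =>
      simp [lineSet, Finset.powersetCard_zero, Finset.filter_singleton]
    | r + 1 =>
      match n with
      | 0 =>
        have h0 : (∅ : Finset ℕ).powersetCard (r+1) = ∅ := by
          rw [Finset.powersetCard_eq_empty]; simp
        simp [lineSet, h0]
      | 1 =>
        match r with
        | 0 =>
          have : lineSet 1 1 = {{0}} := by decide
          simp [this]
        | r + 1 =>
          have h1 : lineSet 1 (r+2) = ∅ := by
            rw [Finset.eq_empty_iff_forall_notMem]
            intro T hT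
            simp only [lineSet, mem_filter, mem_powersetCard] at hT
            have := hT.1.2
            have hle := Finset.card_le_card hT.1.1
            simp at hle
            omega
          rw [h1]
          simp [Nat.choose_eq_zero_of_lt]
      | (n + 2) =>
        -- split by membership of n+1
        have hsplit := Finset.card_filter_add_card_filter_not
          (s := lineSet (n+2) (r+1)) (p := fun T => (n+1) ∈ T)
        have h1 : ((lineSet (n+2) (r+1)).filter (fun T => ¬ (n+1) ∈ T)) = lineSet (n+1) (r+1) := by
          ext T
          simp only [lineSet, mem_filter, mem_powersetCard]
          constructor
          · rintro ⟨⟨⟨hsub, hcard⟩, hprop⟩, hnot⟩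
            refine ⟨⟨fun t ht => ?_, hcard⟩, hprop⟩
            have := hsub ht
            simp only [mem_range] at this ⊢
            rcases Nat.lt_succ_iff_lt_or_eq.mp this with h | h
            · exact h
            · exact absurd (h ▸ ht) hnot
          · rintro ⟨⟨hsub, hcard⟩, hprop⟩
            refine ⟨⟨⟨fun t ht => ?_, hcard⟩, hprop⟩, fun hmem => ?_⟩
            · have := hsub ht; simp only [mem_range] at this ⊢; omega
            · have := hsub hmem; simp at this
        have h2 : ((lineSet (n+2) (r+1)).filter (fun T => (n+1) ∈ T)).card = (lineSet n r).card := by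
          refine Finset.card_bij' (fun T _ => T.erase (n+1)) (fun T _ => insert (n+1) T) ?hi ?hj ?left ?right
          case hi =>
            intro T hT
            simp only [lineSet, mem_filter, mem_powersetCard] at hT ⊢
            obtain ⟨⟨⟨hsub, hcard⟩, hprop⟩, hmem⟩ := hT
            have hn : n ∉ T := fun hn => hprop n hn hmem
            refine ⟨⟨fun t ht => ?_, ?_⟩, fun t ht => ?_⟩
            · rw [Finset.mem_erase] at ht
              obtain ⟨hne, hmem'⟩ := ht
              have h3 := hsub hmem'
              simp only [mem_range] at h3 ⊢
              have htn : t ≠ n := fun h => hn (h ▸ hmem')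
              omega
            · rw [Finset.card_erase_of_mem hmem, hcard]; omega
            · rw [Finset.mem_erase] at ht ⊢
              intro hc
              exact hprop t ht.2 hc.2
          case hj =>
            intro T hT
            simp only [lineSet, mem_filter, mem_powersetCard] at hT ⊢
            obtain ⟨⟨hsub, hcard⟩, hprop⟩ := hT
            have hnot : (n+1) ∉ T := fun h => by have := hsub h; simp at this
            refine ⟨⟨⟨fun t ht => ?_, ?_⟩, fun t ht hc => ?_⟩, Finset.mem_insert_self _ _⟩
            · rw [Finset.mem_insert] at ht
              rcases ht with h | h
              · simp [h]
              · have := hsub h; simp only [mem_range] at this ⊢; omega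
            · rw [Finset.card_insert_of_notMem hnot, hcard]
            · rw [Finset.mem_insert] at ht hc
              rcases ht with h | h
              · rcases hc with h' | h'
                · omega
                · have := hsub h'; simp only [mem_range] at this; omega
              · rcases hc with h' | h'
                · have := hsub h; simp only [mem_range] at this; omega
                · exact hprop t h h'
          case left =>
            intro T hT
            simp only [lineSet, mem_filter] at hT
            exact Finset.insert_erase hT.2
          case right =>
            intro T hT
            simp only [lineSet, mem_filter, mem_powersetCard] at hT
            have hnot : (n+1) ∉ T := fun h => by have := hT.1.1 h; simp at this
            exact Finset.erase_insert hnot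
        have harith : Nat.choose (n + 1 - r) r + Nat.choose (n + 1 + 1 - (r+1)) (r+1)
            = Nat.choose (n + 2 + 1 - (r+1)) (r+1) := by
          rcases le_or_gt r n with h | h
          · have e1 : n + 1 - r = (n - r) + 1 := by omega
            have e2 : n + 1 + 1 - (r+1) = (n - r) + 1 := by omega
            have e3 : n + 2 + 1 - (r+1) = (n - r) + 1 + 1 := by omega
            rw [e1, e2, e3]
            exact (Nat.choose_succ_succ ((n-r)+1) r).symm
          · have z1 := Nat.choose_eq_zero_of_lt (show n + 1 - r < r by omega)
            have z2 := Nat.choose_eq_zero_of_lt (show n + 1 + 1 - (r+1) < r+1 by omega)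
            have z3 := Nat.choose_eq_zero_of_lt (show n + 2 + 1 - (r+1) < r+1 by omega)
            omega
        rw [← hsplit, h2, h1, ih (n+1) (by omega) (r+1), ih n (by omega) r, harith]

lemma cycle_fiber (m r : ℕ) [NeZero m] (x : ZMod m) :
    ((Finset.univ.filter (fun S : Finset (ZMod m) => S.card = r ∧ ∀ i ∈ S, i + 1 ∉ S)).filter
      (fun S => x ∉ S)).card = (lineSet (m-1) r).card := by
  have hmpos : 0 < m := Nat.pos_of_ne_zero (NeZero.ne m)
  -- facts
  have val_pos : ∀ {S : Finset (ZMod m)}, x ∉ S → ∀ {s}, s ∈ S → 1 ≤ (s - x).val ∧ (s - x).val < m := by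
    intro S hx s hs
    have hne : s ≠ x := fun h => hx (h ▸ hs)
    have : s - x ≠ 0 := sub_ne_zero.mpr hne
    have h0 : (s - x).val ≠ 0 := fun h => this (ZMod.val_eq_zero _ |>.mp h)
    exact ⟨Nat.one_le_iff_ne_zero.mpr h0, ZMod.val_lt _⟩
  refine Finset.card_bij' (fun S _ => S.image (fun s => (s - x).val - 1))
    (fun T _ => T.image (fun t => x + ((t+1 : ℕ) : ZMod m))) ?hi ?hj ?left ?right
  case hi =>
    intro S hS
    simp only [mem_filter, mem_univ, true_and] at hS
    obtain ⟨⟨hcard, hprop⟩, hx⟩ := hS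
    have hinj : Set.InjOn (fun s => (s - x).val - 1) ↑S := by
      intro a ha b hb hab
      simp only at hab
      have h1 := val_pos hx ha
      have h2 := val_pos hx hb
      have hv : (a - x).val = (b - x).val := by omega
      have := ZMod.val_injective m hv
      exact sub_left_injective this
    simp only [lineSet, mem_filter, mem_powersetCard]
    refine ⟨⟨fun u hu => ?_, ?_⟩, fun u hu hu1 => ?_⟩
    · simp only [Finset.mem_image] at hu
      obtain ⟨s, hs, rfl⟩ := hu
      have := val_pos hx hs
      simp only [mem_range]
      omega
    · rw [Finset.card_image_of_injOn hinj, hcard]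
    · simp only [Finset.mem_image] at hu hu1
      obtain ⟨a, ha, hau⟩ := hu
      obtain ⟨b, hb, hbu⟩ := hu1
      have h1 := val_pos hx ha
      have h2 := val_pos hx hb
      have hv : (b - x).val = (a - x).val + 1 := by omega
      have heq : b - x = (a - x) + 1 := by
        have := (ZMod.natCast_zmod_val (b - x)).symm
        rw [hv] at this
        push_cast at this
        rw [ZMod.natCast_zmod_val] at this
        exact this
      have hb' : b = a + 1 := by linear_combination heq
      exact hprop a ha (hb' ▸ hb)
  case hj =>
    intro T hT
    simp only [lineSet, mem_filter, mem_powersetCard] at hT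
    obtain ⟨⟨hsub, hcard⟩, hprop⟩ := hT
    have hlt : ∀ {t}, t ∈ T → t + 1 < m := by
      intro t ht
      have := hsub ht
      simp only [mem_range] at this
      omega
    have hval : ∀ {t}, t ∈ T → ((t+1 : ℕ) : ZMod m).val = t + 1 := fun ht =>
      ZMod.val_cast_of_lt (hlt ht)
    have hinj : Set.InjOn (fun t => x + ((t+1 : ℕ) : ZMod m)) ↑T := by
      intro a ha b hb hab
      simp only [add_right_inj] at hab
      have : ((a+1:ℕ) : ZMod m).val = ((b+1:ℕ) : ZMod m).val := by rw [hab]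
      rw [hval ha, hval hb] at this
      omega
    simp only [mem_filter, mem_univ, true_and]
    refine ⟨⟨?_, fun a ha hc => ?_⟩, fun hc => ?_⟩
    · rw [Finset.card_image_of_injOn hinj, hcard]
    · simp only [Finset.mem_image] at ha hc
      obtain ⟨t, ht, rfl⟩ := ha
      obtain ⟨u, hu, huc⟩ := hc
      have h1 : ((t + 2 : ℕ) : ZMod m) = ((u + 1 : ℕ) : ZMod m) := by
        have : x + ((t+1 : ℕ) : ZMod m) + 1 = x + ((u+1 : ℕ) : ZMod m) := huc.symm
        have h2 : ((t+1 : ℕ) : ZMod m) + 1 = ((u+1 : ℕ) : ZMod m) := by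
          have h3 : x + (((t+1 : ℕ) : ZMod m) + 1) = x + ((u+1 : ℕ) : ZMod m) := by
            rw [← add_assoc]; exact this
          exact add_left_cancel h3
        push_cast at h2 ⊢
        rw [← h2]; ring
      have hv : (t + 2) % m = u + 1 := by
        have := congrArg ZMod.val h1
        rwa [ZMod.val_natCast, hval hu] at this
      have htm : t + 2 ≤ m := hlt ht
      rcases Nat.lt_or_ge (t+2) m with h | h
      · rw [Nat.mod_eq_of_lt h] at hv
        have : u = t + 1 := by omega
        exact hprop t ht (this ▸ hu)
      · have : t + 2 = m := by omega
        rw [this, Nat.mod_self] at hv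
        omega
    · simp only [Finset.mem_image] at hc
      obtain ⟨t, ht, htc⟩ := hc
      have : ((t+1 : ℕ) : ZMod m) = 0 := add_eq_left.mp htc
      have := congrArg ZMod.val this
      rw [hval ht, ZMod.val_zero] at this
      omega
  case left =>
    intro S hS
    simp only [mem_filter, mem_univ, true_and] at hS
    obtain ⟨⟨hcard, hprop⟩, hx⟩ := hS
    show ((S.image (fun s => (s - x).val - 1)).image (fun t => x + ((t+1 : ℕ) : ZMod m))) = S
    rw [Finset.image_image]
    have : Set.EqOn ((fun t => x + ((t+1 : ℕ) : ZMod m)) ∘ (fun s => (s - x).val - 1)) id ↑S := by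
      intro s hs
      simp only [Function.comp_apply, id_eq]
      have h1 := val_pos hx hs
      have h2 : (s - x).val - 1 + 1 = (s - x).val := by omega
      rw [h2, ZMod.natCast_zmod_val]
      ring
    rw [Finset.image_congr this, Finset.image_id]
  case right =>
    intro T hT
    simp only [lineSet, mem_filter, mem_powersetCard] at hT
    obtain ⟨⟨hsub, hcard⟩, hprop⟩ := hT
    show ((T.image (fun t => x + ((t+1 : ℕ) : ZMod m))).image (fun s => (s - x).val - 1)) = T
    rw [Finset.image_image]
    have : Set.EqOn ((fun s => (s - x).val - 1) ∘ (fun t => x + ((t+1 : ℕ) : ZMod m))) id ↑T := by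
      intro t ht
      simp only [Function.comp_apply, id_eq]
      have hlt : t + 1 < m := by
        have := hsub ht; simp only [mem_range] at this; omega
      rw [add_sub_cancel_left, ZMod.val_cast_of_lt hlt]
      omega
    rw [Finset.image_congr this, Finset.image_id]

/-- Kaplansky's lemma: the number of ways to choose `r` elements from `m` elements arranged
in a cycle so that no two chosen elements are adjacent equals `(m/(m−r)) · C(m−r, r)`, for
`m ≥ 1` and `0 ≤ r ≤ ⌊m/2⌋` (stated with cleared denominators). -/
theorem kaplansky_cycle (m r : ℕ) (hm : 1 ≤ m) (hr : r ≤ m / 2) :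
    (m - r) *
      Nat.card {S : Finset (ZMod m) // S.card = r ∧ ∀ i ∈ S, i + 1 ∉ S} =
      m * Nat.choose (m - r) r := by
  haveI : NeZero m := ⟨by omega⟩
  classical
  have hNcard : Nat.card {S : Finset (ZMod m) // S.card = r ∧ ∀ i ∈ S, i + 1 ∉ S}
      = (Finset.univ.filter (fun S : Finset (ZMod m) => S.card = r ∧ ∀ i ∈ S, i + 1 ∉ S)).card := by
    rw [Nat.card_eq_fintype_card, Fintype.card_subtype]
  rw [hNcard]
  set F := Finset.univ.filter (fun S : Finset (ZMod m) => S.card = r ∧ ∀ i ∈ S, i + 1 ∉ S) with hF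
  have fiber : ∀ x : ZMod m, (F.filter (fun S => x ∉ S)).card = Nat.choose (m - r) r := by
    intro x
    rw [hF, cycle_fiber m r x, line_count (m-1) r]
    congr 1
    omega
  have step1 : ∑ x : ZMod m, (F.filter (fun S => x ∉ S)).card = F.card * (m - r) := by
    calc ∑ x : ZMod m, (F.filter (fun S => x ∉ S)).card
        = ∑ x : ZMod m, ∑ S ∈ F, if x ∉ S then 1 else 0 := by
          simp [Finset.card_filter]
      _ = ∑ S ∈ F, ∑ x : ZMod m, if x ∉ S then 1 else 0 := Finset.sum_comm
      _ = ∑ S ∈ F, (m - r) := by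
          refine Finset.sum_congr rfl fun S hS => ?_
          have hcard : S.card = r := (Finset.mem_filter.mp hS).2.1
          have hcompl : Finset.univ.filter (fun x : ZMod m => x ∉ S) = Sᶜ := by
            ext y; simp
          rw [← Finset.card_filter, hcompl, Finset.card_compl, ZMod.card, hcard]
      _ = F.card * (m - r) := by rw [Finset.sum_const, smul_eq_mul]
  have step2 : ∑ x : ZMod m, (F.filter (fun S => x ∉ S)).card = m * Nat.choose (m - r) r := by
    rw [Finset.sum_congr rfl (fun x _ => fiber x), Finset.sum_const, Finset.card_univ, ZMod.card,
      smul_eq_mul]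
  have := step1.symm.trans step2
  rw [Nat.mul_comm] at this
  exact this
end

section
/- For n ≥ 2, ∑_{r=0}^{n} (−1)^r · (2n/(2n−r)) · C(2n−r, r) · (n−r)! ≥ 0, and for n ≥ 3 the sum is strictly positive. -/
/-!
Write `a r ≥ 0` for the `r`-th term without its sign. Consecutive terms satisfy
`a (r + 1) (r + 1) (2n - r - 1) = 2 (2n - 2r - 1) a r`, so `a` decreases from `r = 1` on and the
alternating tail from `r = 6` is nonnegative. The same recurrence, started at `a 0 = n!`, evaluates
the first six signed terms to `n! (2n² + 4n - 31) / (30 (n - 1) (n - 2)) > 0` for `n ≥ 5`. Six is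
the fewest that works: `a r / n!` tends to `2^r / r!`, and the partial sums of
`e⁻² = ∑ (-2)^r / r!` that end on a negative term are first positive after six terms.
-/

open Finset Nat

theorem Antitone.alternating_sum_mem_Icc {α : Type*} [Ring α] [PartialOrder α] [IsOrderedRing α]
    {f : ℕ → α} (hf : Antitone f) (hf0 : ∀ i, 0 ≤ f i) (k : ℕ) :
    ∑ i ∈ range k, (-1) ^ i * f i ∈ Set.Icc 0 (f 0) := by
  induction k generalizing f with
  | zero => simpa using hf0 0
  | succ k ih =>
    obtain ⟨h0, h1⟩ := ih (hf.comp_monotone (monotone_id.add_const 1)) (fun i => hf0 (i + 1))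
    have hs : ∑ i ∈ range (k + 1), (-1) ^ i * f i =
        f 0 - ∑ i ∈ range k, (-1) ^ i * f (i + 1) := by
      simp [sum_range_succ', pow_succ, sub_eq_neg_add]
    rw [hs]
    exact ⟨sub_nonneg.2 (h1.trans (hf zero_le_one)), sub_le_self _ h0⟩

theorem Nat.choose_succ_right_mul_succ (N r : ℕ) :
    N.choose (r + 1) * (r + 1) * (N + 1) = (N + 1).choose r * ((N + 1 - r) * (N - r)) := by
  rw [Nat.choose_succ_right_eq, mul_right_comm, Nat.choose_mul_succ_eq]
  ring

def touchardTerm (n r : ℕ) : ℚ :=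
  (2 * n / ((2 * n : ℚ) - r)) * Nat.choose (2 * n - r) r * Nat.factorial (n - r)

def touchardSum (n : ℕ) : ℚ :=
  ∑ r ∈ range (n + 1), (-1) ^ r * touchardTerm n r

theorem touchardTerm_zero {n : ℕ} (hn : n ≠ 0) : touchardTerm n 0 = n ! := by
  simp [touchardTerm, hn]

theorem touchardTerm_eq_zero_of_lt {n r : ℕ} (h : n < r) : touchardTerm n r = 0 := by
  simp [touchardTerm, Nat.choose_eq_zero_of_lt (show 2 * n - r < r by omega)]

theorem touchardTerm_nonneg (n r : ℕ) : 0 ≤ touchardTerm n r := by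
  rcases lt_or_ge n r with h | h
  · exact (touchardTerm_eq_zero_of_lt h).ge
  · have : (r : ℚ) ≤ 2 * n := by exact_mod_cast (show r ≤ 2 * n by omega)
    have : (0 : ℚ) ≤ 2 * n - r := by linarith
    unfold touchardTerm
    positivity

theorem touchardTerm_succ {n r : ℕ} (hr : r < n) :
    touchardTerm n (r + 1) =
      2 * (2 * n - 2 * r - 1) / ((r + 1) * (2 * n - r - 1)) * touchardTerm n r := by
  obtain ⟨t, rfl⟩ : ∃ t, n = r + 1 + t := ⟨n - r - 1, by omega⟩
  have key := Nat.choose_succ_right_mul_succ (r + 2 * t + 1) r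
  rw [show r + 2 * t + 1 + 1 - r = 2 * t + 2 by omega,
    show r + 2 * t + 1 - r = 2 * t + 1 by omega] at key
  have hkey : ((r + 2 * t + 1).choose (r + 1) : ℚ) * (r + 1) * (r + 2 * t + 2) =
      (r + 2 * t + 2).choose r * ((2 * t + 2) * (2 * t + 1)) := by
    exact_mod_cast key
  unfold touchardTerm
  rw [show 2 * (r + 1 + t) - (r + 1) = r + 2 * t + 1 by omega,
    show 2 * (r + 1 + t) - r = r + 2 * t + 2 by omega, show r + 1 + t - (r + 1) = t by omega,
    show r + 1 + t - r = t + 1 by omega, Nat.factorial_succ]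
  push_cast
  rw [show (2 * (r + 1 + t) - (r + 1) : ℚ) = r + 2 * t + 1 by ring,
    show (2 * (r + 1 + t) - 2 * r - 1 : ℚ) = 2 * t + 1 by ring,
    show (2 * (r + 1 + t) - r - 1 : ℚ) = r + 2 * t + 1 by ring,
    show (2 * (r + 1 + t) - r : ℚ) = r + 2 * t + 2 by ring]
  field_simp
  linear_combination hkey

theorem touchardTerm_succ_le {n r : ℕ} (hr : 1 ≤ r) :
    touchardTerm n (r + 1) ≤ touchardTerm n r := by
  rcases lt_or_ge r n with h | h
  · rw [touchardTerm_succ h]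
    refine mul_le_of_le_one_left (touchardTerm_nonneg n r) ?_
    have : (r : ℚ) + 1 ≤ n := by exact_mod_cast h
    have : (1 : ℚ) ≤ r := by exact_mod_cast hr
    rw [div_le_one (by nlinarith)]
    nlinarith
  · rw [touchardTerm_eq_zero_of_lt (by omega)]
    exact touchardTerm_nonneg n r

theorem sum_range_six_touchardTerm (m : ℕ) :
    ∑ r ∈ range 6, (-1 : ℚ) ^ r * touchardTerm (m + 5) r =
      (m + 5)! * (2 * m ^ 2 + 24 * m + 39) / (30 * (m + 4) * (m + 3)) := by
  simp only [sum_range_succ, sum_range_zero, touchardTerm_succ (show 4 < m + 5 by omega),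
    touchardTerm_succ (show 3 < m + 5 by omega), touchardTerm_succ (show 2 < m + 5 by omega),
    touchardTerm_succ (show 1 < m + 5 by omega), touchardTerm_succ (show 0 < m + 5 by omega),
    touchardTerm_zero (show m + 5 ≠ 0 by omega)]
  push_cast
  ring_nf
  field_simp
  ring

theorem touchardSum_two : touchardSum 2 = 0 := by
  norm_num [touchardSum, touchardTerm, sum_range_succ, Nat.choose]

theorem touchardSum_pos {n : ℕ} (hn : 3 ≤ n) : 0 < touchardSum n := by
  obtain rfl | rfl | ⟨m, rfl⟩ : n = 3 ∨ n = 4 ∨ ∃ m, n = m + 5 := by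
    rcases le_or_gt 5 n with h | h
    · exact .inr (.inr ⟨n - 5, by omega⟩)
    · omega
  · norm_num [touchardSum, touchardTerm, sum_range_succ, Nat.choose, Nat.factorial]
  · norm_num [touchardSum, touchardTerm, sum_range_succ, Nat.choose, Nat.factorial]
  have tail_nonneg : 0 ≤ ∑ i ∈ range m, (-1 : ℚ) ^ i * touchardTerm (m + 5) (6 + i) :=
    (Antitone.alternating_sum_mem_Icc
      (antitone_nat_of_succ_le fun i => touchardTerm_succ_le (r := 6 + i) (by omega))
      (fun i => touchardTerm_nonneg _ _) m).1
  have head_pos : 0 < ∑ r ∈ range 6, (-1 : ℚ) ^ r * touchardTerm (m + 5) r := by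
    rw [sum_range_six_touchardTerm]
    positivity
  have tail_eq : ∑ i ∈ range m, (-1 : ℚ) ^ (6 + i) * touchardTerm (m + 5) (6 + i) =
      ∑ i ∈ range m, (-1 : ℚ) ^ i * touchardTerm (m + 5) (6 + i) :=
    sum_congr rfl fun i _ => by rw [pow_add]; norm_num
  rw [touchardSum, show m + 5 + 1 = 6 + m by omega, sum_range_add, tail_eq]
  exact add_pos_of_pos_of_nonneg head_pos tail_nonneg

/-- For `n ≥ 2` the Touchard sum `∑_{r=0}^{n} (−1)^r (2n/(2n−r)) C(2n−r,r) (n−r)!` is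
nonnegative, and for `n ≥ 3` it is strictly positive. -/
theorem touchard_sum_nonneg (n : ℕ) (hn : 2 ≤ n) :
    0 ≤ ∑ r ∈ Finset.range (n + 1),
        (-1 : ℚ) ^ r * (2 * n / ((2 * n : ℚ) - r)) * Nat.choose (2 * n - r) r *
          Nat.factorial (n - r) ∧
      (3 ≤ n →
        0 < ∑ r ∈ Finset.range (n + 1),
          (-1 : ℚ) ^ r * (2 * n / ((2 * n : ℚ) - r)) * Nat.choose (2 * n - r) r *
            Nat.factorial (n - r)) := by
  have hsum : ∑ r ∈ Finset.range (n + 1),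
      (-1 : ℚ) ^ r * (2 * n / ((2 * n : ℚ) - r)) * Nat.choose (2 * n - r) r *
        Nat.factorial (n - r) = touchardSum n :=
    sum_congr rfl fun r _ => by simp only [touchardTerm, mul_assoc]
  rw [hsum]
  rcases hn.eq_or_lt with rfl | h3
  · exact ⟨touchardSum_two.ge, by omega⟩
  · exact ⟨(touchardSum_pos h3).le, fun _ => touchardSum_pos h3⟩
end
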